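/- arXiv:1612.03297 — 8 statements merged into one kernel-verified Lean document; each statement's English description precedes it below -/
import Mathlib

section
/- Let V be a finite-dimensional real vector space and let A and E be symmetric bilinear forms on V. Then Q(A,E) = 0 (i.e. Q(A,E)(X₁,X₂;X,Y) = 0 for all X₁,X₂,X,Y ∈ V) if and only if A and E are linearly dependent. -/
/- Pointwise algebraic operations used for pseudosymmetry-type curvature conditions. -/
namespace WPS

variable {V : Type} [AddCommGroup V] [Module ℝ V]

/-- The endomorphism `X ∧_A Y` given by `(X ∧_A Y) Z = A(Y,Z) X - A(X,Z) Y`. -/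
def wedge (A : V → V → ℝ) (X Y Z : V) : V := A Y Z • X - A X Z • Y

/-- `(D · H)(X₁,X₂,X₃,X₄; X,Y)` for a (0,4)-tensor `H`, where `Dop X Y` is the
curvature operator `𝒟(X,Y)` of `D`. -/
def dot4 (Dop : V → V → V → V) (H : V → V → V → V → ℝ)
    (X1 X2 X3 X4 X Y : V) : ℝ :=
  -H (Dop X Y X1) X2 X3 X4 - H X1 (Dop X Y X2) X3 X4
    - H X1 X2 (Dop X Y X3) X4 - H X1 X2 X3 (Dop X Y X4)

/-- `(D · H)(X₁,X₂; X,Y)` for a (0,2)-tensor `H`. -/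
def dot2 (Dop : V → V → V → V) (H : V → V → ℝ) (X1 X2 X Y : V) : ℝ :=
  -H (Dop X Y X1) X2 - H X1 (Dop X Y X2)

/-- The Tachibana operator `Q(A,H)` for a (0,4)-tensor `H`. -/
def Q4 (A : V → V → ℝ) (H : V → V → V → V → ℝ) :
    V → V → V → V → V → V → ℝ := dot4 (wedge A) H

/-- The Tachibana operator `Q(A,H)` for a (0,2)-tensor `H`. -/
def Q2 (A : V → V → ℝ) (H : V → V → ℝ) : V → V → V → V → ℝ := dot2 (wedge A) H

/-- Symmetric bilinear form (as a bare function). -/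
def SymBilin (A : V → V → ℝ) : Prop :=
  (∀ x y, A x y = A y x) ∧ ∀ y, IsLinearMap ℝ fun x => A x y

/-- Nondegeneracy of a bilinear form. -/
def Nondeg (g : V → V → ℝ) : Prop := ∀ x, (∀ y, g x y = 0) → x = 0

/-- Algebraic curvature tensor: multilinear, with the antisymmetries, pair symmetry
and first Bianchi identity of a Riemann curvature tensor. -/
def Curv (R : V → V → V → V → ℝ) : Prop :=
  (∀ y z w, IsLinearMap ℝ fun x => R x y z w) ∧
  (∀ x z w, IsLinearMap ℝ fun y => R x y z w) ∧
  (∀ x y w, IsLinearMap ℝ fun z => R x y z w) ∧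
  (∀ x y z, IsLinearMap ℝ fun w => R x y z w) ∧
  (∀ x y z w, R x y z w = -R y x z w) ∧
  (∀ x y z w, R x y z w = -R x y w z) ∧
  (∀ x y z w, R x y z w = R z w x y) ∧
  ∀ x y z w, R x y z w + R y z x w + R z x y w = 0

/-- The Gaussian-type tensor `G(x,y,z,w) = g(x,w) g(y,z) - g(x,z) g(y,w)`. -/
def Gten (g : V → V → ℝ) (x y z w : V) : ℝ := g x w * g y z - g x z * g y w

end WPS

/- If `Q(A,E) = 0` and `A ≠ 0`, polarization gives a vector `u` with `A(u,u) ≠ 0`. Evaluating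
`Q(A,E)(u,u;x,u) = 0` yields `E(x,u) = c A(x,u)` with `c = E(u,u)/A(u,u)`, and then
`Q(A,E)(x₁,u;x,u) = 0` upgrades this to `E = c A`. Conversely, if `αA + βE = 0` then
`α Q(A,E) = -β Q(E,E)` and `β Q(A,E) = -α Q(A,A)`, and `Q(B,B) = 0` for symmetric `B`. -/

namespace WPS

variable {V : Type} [AddCommGroup V] [Module ℝ V]

theorem SymBilin.apply_smul_sub_smul_left {E : V → V → ℝ} (hE : SymBilin E)
    (a b : ℝ) (x y z : V) : E (a • x - b • y) z = a * E x z - b * E y z := by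
  let f : V →ₗ[ℝ] ℝ := IsLinearMap.mk' (fun v => E v z) (hE.2 z)
  change f (a • x - b • y) = a * f x - b * f y
  rw [map_sub, map_smul, map_smul, smul_eq_mul, smul_eq_mul]

theorem SymBilin.eq_zero_of_apply_self_eq_zero {A : V → V → ℝ} (hA : SymBilin A)
    (h : ∀ u, A u u = 0) (x y : V) : A x y = 0 := by
  have hadd : ∀ u v w : V, A (u + v) w = A u w + A v w := fun u v w => (hA.2 w).map_add u v
  have hpolar : A (x + y) (x + y) = A x x + 2 * A x y + A y y := by
    rw [hadd, hA.1 x, hA.1 y, hadd, hadd, hA.1 y x]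
    ring
  linarith [h (x + y), h x, h y]

theorem Q2_apply {A E : V → V → ℝ} (hE : SymBilin E) (x1 x2 x y : V) :
    Q2 A E x1 x2 x y =
      A x x1 * E y x2 + A x x2 * E x1 y - A y x1 * E x x2 - A y x2 * E x1 x := by
  have h1 := hE.apply_smul_sub_smul_left (A y x1) (A x x1) x y x2
  have h2 := hE.apply_smul_sub_smul_left (A y x2) (A x x2) x y x1
  simp only [Q2, dot2, wedge]
  rw [hE.1 x1, h1, h2, hE.1 x x1, hE.1 y x1]
  ring

theorem eq_smul_of_Q2_eq_zero {A E : V → V → ℝ} (hA : SymBilin A) (hE : SymBilin E)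
    (hQ : ∀ x1 x2 x y : V, Q2 A E x1 x2 x y = 0) {u : V} (hu : A u u ≠ 0) (x y : V) :
    E x y = E u u / A u u * A x y := by
  set c := E u u / A u u
  have hcu : E u u = c * A u u := (div_mul_cancel₀ _ hu).symm
  clear_value c
  have hQ' := fun x1 x2 x y => (Q2_apply hE x1 x2 x y).symm.trans (hQ x1 x2 x y)
  have hright : ∀ x, E x u = c * A x u := by
    intro x
    have h := hQ' u u x u
    rw [hE.1 u x, hcu] at h
    have : A u u * (E x u - c * A x u) = 0 := by linear_combination -h / 2
    linarith [(mul_eq_zero.mp this).resolve_left hu]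
  have h := hQ' x u y u
  rw [hright x, hright y, hcu, hA.1 u x, hA.1 y x] at h
  have : A u u * (E x y - c * A x y) = 0 := by linear_combination -h
  linarith [(mul_eq_zero.mp this).resolve_left hu]

theorem Q2_eq_zero_of_linearDependent {A E : V → V → ℝ} (hA : SymBilin A) (hE : SymBilin E)
    {α β : ℝ} (hne : (α, β) ≠ (0, 0)) (h : ∀ x y, α * A x y + β * E x y = 0)
    (x1 x2 x y : V) : Q2 A E x1 x2 x y = 0 := by
  have hαQ : α * Q2 A E x1 x2 x y = 0 := by
    rw [Q2_apply hE, hE.1 x1 y, hE.1 x1 x]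
    linear_combination E y x2 * h x x1 + E y x1 * h x x2 - E x x2 * h y x1 - E x x1 * h y x2
  have hβQ : β * Q2 A E x1 x2 x y = 0 := by
    rw [Q2_apply hE]
    linear_combination A x x1 * h y x2 + A x x2 * h x1 y - A y x1 * h x x2 - A y x2 * h x1 x
      - α * A x x2 * hA.1 x1 y + α * A y x2 * hA.1 x1 x
  by_contra hQ
  exact hne (Prod.ext ((mul_eq_zero.mp hαQ).resolve_right hQ)
    ((mul_eq_zero.mp hβQ).resolve_right hQ))

end WPS

theorem stmt1_general {V : Type} [AddCommGroup V] [Module ℝ V]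
    (A E : V → V → ℝ) (hA : WPS.SymBilin A) (hE : WPS.SymBilin E) :
    (∀ x1 x2 x y : V, WPS.Q2 A E x1 x2 x y = 0) ↔
      ∃ α β : ℝ, (α, β) ≠ (0, 0) ∧ ∀ x y : V, α * A x y + β * E x y = 0 := by
  refine ⟨fun hQ => ?_, fun ⟨α, β, hne, h⟩ => WPS.Q2_eq_zero_of_linearDependent hA hE hne h⟩
  by_cases hA0 : ∀ u, A u u = 0
  · exact ⟨1, 0, by simp, fun x y => by
      simp [WPS.SymBilin.eq_zero_of_apply_self_eq_zero hA hA0 x y]⟩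
  · push Not at hA0
    obtain ⟨u, hu⟩ := hA0
    refine ⟨E u u / A u u, -1, by simp, fun x y => ?_⟩
    rw [WPS.eq_smul_of_Q2_eq_zero hA hE hQ hu x y]
    ring

theorem stmt1 {V : Type} [AddCommGroup V] [Module ℝ V] [FiniteDimensional ℝ V]
    (A E : V → V → ℝ) (hA : WPS.SymBilin A) (hE : WPS.SymBilin E) :
    (∀ x1 x2 x y : V, WPS.Q2 A E x1 x2 x y = 0) ↔
      ∃ α β : ℝ, (α, β) ≠ (0, 0) ∧ ∀ x y : V, α * A x y + β * E x y = 0 :=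
  stmt1_general A E hA hE
end

section
/- Let V be an n-dimensional real vector space (n ≥ 1) with a nondegenerate symmetric bilinear form g, and let S be a symmetric bilinear form on V. Then Q(g,S) = 0 if and only if S = (tr_g S / n)·g, i.e. if and only if S is Einstein with respect to g. -/
open LinearMap

lemma trace_smulRight' {V : Type} [AddCommGroup V] [Module ℝ V] [FiniteDimensional ℝ V]
    (f : V →ₗ[ℝ] ℝ) (v : V) : trace ℝ V (f.smulRight v) = f v := by
  have h : f.smulRight v = dualTensorHom ℝ V V (f ⊗ₜ v) := by
    ext x; simp
  rw [h, trace_eq_contract_apply]; simp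

theorem stmt2 {V : Type} [AddCommGroup V] [Module ℝ V] [FiniteDimensional ℝ V]
    (n : ℕ) (hn : 1 ≤ n) (hdim : Module.finrank ℝ V = n)
    (g : V → V → ℝ) (hg : WPS.SymBilin g) (hgn : WPS.Nondeg g)
    (S : V → V → ℝ) (hS : WPS.SymBilin S)
    (Ssh : V →ₗ[ℝ] V) (hSsh : ∀ x y, g (Ssh x) y = S x y) :
    (∀ x1 x2 x y : V, WPS.Q2 g S x1 x2 x y = 0) ↔
      ∀ x y : V, S x y = (LinearMap.trace ℝ V Ssh / (n : ℝ)) * g x y := by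
  obtain ⟨gsym, glin⟩ := hg
  obtain ⟨Ssym, Slin⟩ := hS
  have hnR : (n : ℝ) ≠ 0 := Nat.cast_ne_zero.mpr (by omega)
  set c : ℝ := LinearMap.trace ℝ V Ssh / (n : ℝ) with hc
  -- expansion of Q2
  have hexp : ∀ x1 x2 x y : V, WPS.Q2 g S x1 x2 x y =
      -(g y x1 * S x x2) + g x x1 * S y x2 - g y x2 * S x x1 + g x x2 * S y x1 := by
    intro x1 x2 x y
    have e1 : S (WPS.wedge g x y x1) x2 = g y x1 * S x x2 - g x x1 * S y x2 := by
      unfold WPS.wedge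
      rw [(Slin x2).map_sub, (Slin x2).map_smul, (Slin x2).map_smul]
      simp [smul_eq_mul]
    have e2 : S x1 (WPS.wedge g x y x2) = g y x2 * S x x1 - g x x2 * S y x1 := by
      rw [Ssym]
      unfold WPS.wedge
      rw [(Slin x1).map_sub, (Slin x1).map_smul, (Slin x1).map_smul]
      simp [smul_eq_mul, Ssym]
    unfold WPS.Q2 WPS.dot2
    rw [e1, e2]; ring
  constructor
  · intro h
    -- the flat map
    have gadd : ∀ z a b : V, g z (a + b) = g z a + g z b := by
      intro z a b
      rw [gsym, (glin z).map_add, gsym a, gsym b]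
    have gsmul : ∀ (r : ℝ) (z a : V), g z (r • a) = r * g z a := by
      intro r z a
      rw [gsym, (glin z).map_smul, gsym a]; rfl
    let Φ : V →ₗ[ℝ] Module.Dual ℝ V :=
      { toFun := fun w => IsLinearMap.mk' (fun z => g z w) (glin w)
        map_add' := by
          intro a b; ext z
          simp [IsLinearMap.mk'_apply, gadd]
        map_smul' := by
          intro r a; ext z
          simp [IsLinearMap.mk'_apply, gsmul, smul_eq_mul] }
    have hΦapp : ∀ w z, Φ w z = g z w := fun _ _ => rfl
    have hΦinj : Function.Injective Φ := by
      rw [← LinearMap.ker_eq_bot, LinearMap.ker_eq_bot']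
      intro w hw
      apply hgn
      intro z
      rw [gsym]
      have := congrFun (congrArg (fun (f : Module.Dual ℝ V) => (f : V → ℝ)) hw) z
      simpa [hΦapp] using this
    have hΦsurj : Function.Surjective Φ :=
      (LinearMap.injective_iff_surjective_of_finrank_eq_finrank
        (by rw [Subspace.dual_finrank_eq])).mp hΦinj
    -- the key scalar identity for all covectors
    have key : ∀ (f h' : Module.Dual ℝ V) (x y : V),
        f y * h' (Ssh x) - f x * h' (Ssh y) + h' y * f (Ssh x) - h' x * f (Ssh y) = 0 := by
      intro f h' x y
      obtain ⟨x1, hx1⟩ := hΦsurj f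
      obtain ⟨x2, hx2⟩ := hΦsurj h'
      have hq := h x1 x2 x y
      rw [hexp] at hq
      have hf : ∀ z, f z = g z x1 := fun z => by rw [← hx1]; rfl
      have hh : ∀ z, h' z = g z x2 := fun z => by rw [← hx2]; rfl
      simp only [hf, hh]
      simp only [← hSsh] at hq
      have g1 : ∀ z, g (Ssh z) x1 = g x1 (Ssh z) := fun z => gsym _ _
      have g2 : ∀ z, g (Ssh z) x2 = g x2 (Ssh z) := fun z => gsym _ _
      simp only [g1, g2] at hq ⊢
      linarith
    -- pointwise: n • Ssh x = (tr Ssh) • x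
    have main : ∀ x : V, Ssh x = c • x := by
      intro x
      have htr : ∀ f : Module.Dual ℝ V,
          f (Ssh x) - f x * trace ℝ V Ssh + f (Ssh x) * n - f (Ssh x) = 0 := by
        intro f
        set L : V →ₗ[ℝ] V :=
          (f.smulRight (Ssh x)) - f x • Ssh + f (Ssh x) • (LinearMap.id : V →ₗ[ℝ] V)
            - ((f ∘ₗ Ssh).smulRight x) with hL
        have hzero : L = 0 := by
          ext y
          rw [LinearMap.zero_apply]
          have h2 : ∀ h' : Module.Dual ℝ V, h' (L y) = 0 := by
            intro h'
            rw [hL]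
            simp only [LinearMap.sub_apply, LinearMap.add_apply, LinearMap.smul_apply,
              LinearMap.smulRight_apply, LinearMap.id_apply, LinearMap.comp_apply,
              map_sub, map_add, map_smul, smul_eq_mul]
            have := key f h' x y
            linarith
          exact (Module.forall_dual_apply_eq_zero_iff ℝ _).mp h2
        have := congrArg (trace ℝ V) hzero
        rw [hL] at this
        simp only [map_sub, map_add, map_smul, trace_id, LinearMap.map_zero,
          trace_smulRight', LinearMap.comp_apply, hdim, smul_eq_mul] at this
        linarith
      have hfin : ∀ f : Module.Dual ℝ V, f ((n : ℝ) • Ssh x - trace ℝ V Ssh • x) = 0 := by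
        intro f
        have := htr f
        simp only [map_sub, map_smul, smul_eq_mul]
        linarith
      have := (Module.forall_dual_apply_eq_zero_iff ℝ _).mp hfin
      have h3 : (n : ℝ) • Ssh x = trace ℝ V Ssh • x := by
        rwa [sub_eq_zero] at this
      have h4 : Ssh x = ((n : ℝ)⁻¹ * trace ℝ V Ssh) • x := by
        rw [← smul_smul, ← h3, smul_smul, inv_mul_cancel₀ hnR, one_smul]
      rw [h4, hc, div_eq_inv_mul]
    intro x y
    rw [← hSsh x y, main x, (glin y).map_smul, smul_eq_mul]
  · intro h x1 x2 x y
    rw [hexp, h x x2, h y x2, h x x1, h y x1]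
    ring
end

section
/- With the pointwise warped-product curvature data of the setup, and reals L₁, L₂: if R·R = L₁ Q(g,R) + L₂ Q(S,R) holds on V (all operations taken with respect to g), then on V̄ one has R̄·T = L₁ Q(ḡ,T) + L₂ Q(S̄,T). -/
/-!
Evaluate `R · R = L₁ Q(g,R) + L₂ Q(S,R)` at `X₁ = x̄, X₂ = ξ̃, X₃ = ȳ, X₄ = η̃; X = ū, Y = v̄`.
The operators `ℛ(ū,v̄)`, `ū ∧_g v̄` and `ū ∧_S v̄` preserve `V̄` (acting there as `ℛ̄(ū,v̄)`,
`ū ∧_ḡ v̄` and `ū ∧_{S̄ - qT} v̄`) and kill `Ṽ`, so every term only sees the mixed block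
`f T ⊗ g̃` of `R`. The identity thus becomes `f g̃(ξ,η)` times
`R̄ · T = L₁ Q(ḡ,T) + L₂ Q(S̄ - qT, T)`, where `Q(T,T) = 0` because `T` is symmetric, and
`ξ, η` with `g̃(ξ,η) ≠ 0` exist since `g̃` is nondegenerate on `Ṽ ≠ 0`.
-/

namespace WPS

section Nondeg

variable {V : Type} [AddCommGroup V]

theorem Nondeg.const_mul {A : V → V → ℝ} (hA : Nondeg A) {c : ℝ} (hc : c ≠ 0) :
    Nondeg fun x y => c * A x y :=
  fun x hx => hA x fun y => (mul_eq_zero.mp (hx y)).resolve_left hc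

theorem Nondeg.exists_ne_zero [Nontrivial V] {A : V → V → ℝ} (hAn : Nondeg A) :
    ∃ x y, A x y ≠ 0 := by
  obtain ⟨x, hx⟩ := exists_ne (0 : V)
  by_contra! h
  exact hx (hAn x (h x))

end Nondeg

section Bilinear

variable {V : Type} [AddCommGroup V] [Module ℝ V]

theorem SymBilin.map_zero_left {A : V → V → ℝ} (hA : SymBilin A) (y : V) : A 0 y = 0 :=
  (hA.2 y).map_zero

theorem SymBilin.map_zero_right {A : V → V → ℝ} (hA : SymBilin A) (x : V) : A x 0 = 0 := by
  rw [hA.1, hA.map_zero_left]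

theorem SymBilin.map_smul_sub_smul_left {A : V → V → ℝ} (hA : SymBilin A) (a b : ℝ)
    (x y z : V) : A (a • x - b • y) z = a * A x z - b * A y z := by
  rw [(hA.2 z).map_sub, (hA.2 z).map_smul, (hA.2 z).map_smul, smul_eq_mul, smul_eq_mul]

theorem SymBilin.const_mul {A : V → V → ℝ} (hA : SymBilin A) (c : ℝ) :
    SymBilin fun x y => c * A x y :=
  ⟨fun x y => by dsimp only; rw [hA.1], fun y =>
    ⟨fun x x' => by dsimp only; rw [(hA.2 y).map_add, mul_add],
     fun a x => by dsimp only; rw [(hA.2 y).map_smul, smul_eq_mul, smul_eq_mul, mul_left_comm]⟩⟩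

theorem Nondeg.eq_of_forall {A : V → V → ℝ} (hAn : Nondeg A) (hA : SymBilin A) {x x' : V}
    (h : ∀ y, A x y = A x' y) : x = x' :=
  sub_eq_zero.mp <| hAn _ fun y => by rw [(hA.2 y).map_sub, h, sub_self]

theorem ricci_eq_zero {g : V → V → ℝ} (hg : Nondeg g) {R : V → V → V → V → ℝ}
    {S : V → V → ℝ}
    (hS : ∀ y z, ∃ E : V →ₗ[ℝ] V, (∀ x w, g (E x) w = R x y z w) ∧
      S y z = LinearMap.trace ℝ V E)
    {y z : V} (h : ∀ x w, R x y z w = 0) : S y z = 0 := by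
  obtain ⟨E, hE, hSE⟩ := hS y z
  have hE0 : E = 0 := LinearMap.ext fun x => hg _ fun w => by rw [hE, h]
  rw [hSE, hE0, map_zero]

theorem Q2_sub_mul_self {A H : V → V → ℝ} (hH : SymBilin H) (c : ℝ) :
    Q2 (fun a b => A a b - c * H a b) H = Q2 A H := by
  funext x y u v
  simp only [Q2, dot2, wedge]
  rw [hH.1 x, hH.1 x]
  simp only [hH.map_smul_sub_smul_left]
  ring

end Bilinear

namespace Curv

variable {V : Type} [AddCommGroup V] [Module ℝ V] {R : V → V → V → V → ℝ}

theorem map_zero₁ (hR : Curv R) (y z w : V) : R 0 y z w = 0 := (hR.1 y z w).map_zero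

theorem map_zero₂ (hR : Curv R) (x z w : V) : R x 0 z w = 0 := (hR.2.1 x z w).map_zero

theorem map_zero₃ (hR : Curv R) (x y w : V) : R x y 0 w = 0 := (hR.2.2.1 x y w).map_zero

theorem map_zero₄ (hR : Curv R) (x y z : V) : R x y z 0 = 0 := (hR.2.2.2.1 x y z).map_zero

end Curv

section Product

variable {Vb Vf : Type} [AddCommGroup Vb] [Module ℝ Vb] [AddCommGroup Vf] [Module ℝ Vf]

def sumForm (A : Vb → Vb → ℝ) (B : Vf → Vf → ℝ) (X Y : Vb × Vf) : ℝ :=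
  A X.1 Y.1 + B X.2 Y.2

/-- The curvature tensor `R` of the setup, its three blocks extended by the curvature
symmetries to a single formula. -/
def warpedCurvature (gf : Vf → Vf → ℝ) (f Δ : ℝ) (T : Vb → Vb → ℝ)
    (Rb : Vb → Vb → Vb → Vb → ℝ) (Rf : Vf → Vf → Vf → Vf → ℝ) (X Y Z W : Vb × Vf) : ℝ :=
  Rb X.1 Y.1 Z.1 W.1
    + f * (T X.1 Z.1 * gf Y.2 W.2 + T Y.1 W.1 * gf X.2 Z.2
      - T X.1 W.1 * gf Y.2 Z.2 - T Y.1 Z.1 * gf X.2 W.2)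
    + f * Rf X.2 Y.2 Z.2 W.2 - f ^ 2 * Δ * Gten gf X.2 Y.2 Z.2 W.2

theorem sumForm_ext {A : Vb → Vb → ℝ} {B : Vf → Vf → ℝ} (hA : SymBilin A) (hAn : Nondeg A)
    (hB : SymBilin B) (hBn : Nondeg B) {X X' : Vb × Vf}
    (h : ∀ W, sumForm A B X W = sumForm A B X' W) : X = X' :=
  Prod.ext
    (hAn.eq_of_forall hA fun w => by simpa [sumForm, hB.map_zero_right] using h (w, 0))
    (hBn.eq_of_forall hB fun w => by simpa [sumForm, hA.map_zero_right] using h (0, w))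

theorem wedge_sumForm_inl {A : Vb → Vb → ℝ} {B : Vf → Vf → ℝ} (hB : ∀ ζ, B 0 ζ = 0)
    (u v z : Vb) :
    wedge (sumForm A B) (u, 0) (v, 0) (z, 0) = (wedge A u v z, 0) := by
  simp [wedge, sumForm, hB]

theorem wedge_sumForm_inr {A : Vb → Vb → ℝ} {B : Vf → Vf → ℝ} (hA : ∀ a, A a 0 = 0)
    (hB : ∀ ζ, B 0 ζ = 0) (u v : Vb) (ζ : Vf) :
    wedge (sumForm A B) (u, 0) (v, 0) (0, ζ) = 0 := by
  simp [wedge, sumForm, hA, hB]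

section Warped

variable {gb : Vb → Vb → ℝ} {gf : Vf → Vf → ℝ} {f Δ : ℝ} {T : Vb → Vb → ℝ}
  {Rb : Vb → Vb → Vb → Vb → ℝ} {Rf : Vf → Vf → Vf → Vf → ℝ}

theorem dot4_warpedCurvature_inl_inr (hgf : SymBilin gf) (hT : SymBilin T) (hRb : Curv Rb)
    (hRf : Curv Rf) {D : Vb × Vf → Vb × Vf → Vb × Vf → Vb × Vf} {Db : Vb → Vb → Vb → Vb}
    {u v : Vb} (hD_inl : ∀ z, D (u, 0) (v, 0) (z, 0) = (Db u v z, 0))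
    (hD_inr : ∀ ζ, D (u, 0) (v, 0) (0, ζ) = 0) (x y : Vb) (ξ η : Vf) :
    dot4 D (warpedCurvature gf f Δ T Rb Rf) (x, 0) (0, ξ) (y, 0) (0, η) (u, 0) (v, 0)
      = f * gf ξ η * dot2 Db T x y u v := by
  simp only [dot4, dot2, hD_inl, hD_inr]
  simp [warpedCurvature, Gten, hgf.map_zero_left, hgf.map_zero_right, hT.map_zero_left,
    hT.map_zero_right, hRb.map_zero₂, hRf.map_zero₁]
  ring

theorem curvatureOp_inl (hgb : SymBilin gb) (hgbn : Nondeg gb) (hgf : SymBilin gf)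
    (hgfn : Nondeg gf) (hf : f ≠ 0) (hRf : Curv Rf)
    {Rbop : Vb → Vb → Vb → Vb} (hRbop : ∀ x y z w, gb (Rbop x y z) w = Rb x y z w)
    {Rop : Vb × Vf → Vb × Vf → Vb × Vf → Vb × Vf}
    (hRop : ∀ X Y Z W, sumForm gb (fun ξ η => f * gf ξ η) (Rop X Y Z) W
      = warpedCurvature gf f Δ T Rb Rf X Y Z W) (u v z : Vb) :
    Rop (u, 0) (v, 0) (z, 0) = (Rbop u v z, 0) :=
  sumForm_ext hgb hgbn (hgf.const_mul f) (hgfn.const_mul hf) fun W => by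
    rw [hRop]
    simp [sumForm, warpedCurvature, Gten, hRbop, hgf.map_zero_left, hRf.map_zero₁]

theorem curvatureOp_inr (hgb : SymBilin gb) (hgbn : Nondeg gb) (hgf : SymBilin gf)
    (hgfn : Nondeg gf) (hf : f ≠ 0) (hT : SymBilin T) (hRb : Curv Rb) (hRf : Curv Rf)
    {Rop : Vb × Vf → Vb × Vf → Vb × Vf → Vb × Vf}
    (hRop : ∀ X Y Z W, sumForm gb (fun ξ η => f * gf ξ η) (Rop X Y Z) W
      = warpedCurvature gf f Δ T Rb Rf X Y Z W) (u v : Vb) (ζ : Vf) :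
    Rop (u, 0) (v, 0) (0, ζ) = 0 :=
  sumForm_ext hgb hgbn (hgf.const_mul f) (hgfn.const_mul hf) fun W => by
    rw [hRop]
    simp [sumForm, warpedCurvature, Gten, hgb.map_zero_left, hgf.map_zero_left,
      hT.map_zero_right, hRb.map_zero₃, hRf.map_zero₁]

end Warped

end Product

end WPS

theorem stmt4_general
    {Vb Vf : Type} [AddCommGroup Vb] [Module ℝ Vb]
    [AddCommGroup Vf] [Module ℝ Vf]
    (q : ℕ) (hq : 1 ≤ q)
    (hdf : Module.finrank ℝ Vf = q)
    (gb : Vb → Vb → ℝ) (hgb : WPS.SymBilin gb) (hgbn : WPS.Nondeg gb)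
    (gf : Vf → Vf → ℝ) (hgf : WPS.SymBilin gf) (hgfn : WPS.Nondeg gf)
    (f Δ : ℝ) (hf : 0 < f)
    (T : Vb → Vb → ℝ) (hT : WPS.SymBilin T)
    (Ω : ℝ)
    (Rb : Vb → Vb → Vb → Vb → ℝ) (hRb : WPS.Curv Rb)
    (Rf : Vf → Vf → Vf → Vf → ℝ) (hRf : WPS.Curv Rf)
    (Rbop : Vb → Vb → Vb → Vb) (hRbop : ∀ x y z w, gb (Rbop x y z) w = Rb x y z w)
    (Sb : Vb → Vb → ℝ)
    (hSb : ∀ y z, ∃ E : Vb →ₗ[ℝ] Vb, (∀ x w, gb (E x) w = Rb x y z w) ∧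
      Sb y z = LinearMap.trace ℝ Vb E)
    (Sf : Vf → Vf → ℝ)
    (hSf : ∀ y z, ∃ E : Vf →ₗ[ℝ] Vf, (∀ x w, gf (E x) w = Rf x y z w) ∧
      Sf y z = LinearMap.trace ℝ Vf E)
    (gV : Vb × Vf → Vb × Vf → ℝ)
    (hgV : ∀ X Y, gV X Y = gb X.1 Y.1 + f * gf X.2 Y.2)
    (RV : Vb × Vf → Vb × Vf → Vb × Vf → Vb × Vf → ℝ)
    (hRV : ∀ X Y Z W, RV X Y Z W = Rb X.1 Y.1 Z.1 W.1
      + f * (T X.1 Z.1 * gf Y.2 W.2 + T Y.1 W.1 * gf X.2 Z.2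
        - T X.1 W.1 * gf Y.2 Z.2 - T Y.1 Z.1 * gf X.2 W.2)
      + f * Rf X.2 Y.2 Z.2 W.2 - f ^ 2 * Δ * WPS.Gten gf X.2 Y.2 Z.2 W.2)
    (SV : Vb × Vf → Vb × Vf → ℝ)
    (hSV : ∀ X Y, SV X Y = (Sb X.1 Y.1 - (q : ℝ) * T X.1 Y.1)
      + (Sf X.2 Y.2 + Ω * gf X.2 Y.2))
    (Rop : Vb × Vf → Vb × Vf → Vb × Vf → Vb × Vf)
    (hRop : ∀ X Y Z W, gV (Rop X Y Z) W = RV X Y Z W)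
    (L1 L2 : ℝ)
    (hmain : (∀ X1 X2 X3 X4 X Y : Vb × Vf, WPS.dot4 Rop RV X1 X2 X3 X4 X Y
      = L1 * WPS.Q4 gV RV X1 X2 X3 X4 X Y + L2 * WPS.Q4 SV RV X1 X2 X3 X4 X Y)) :
    ∀ x y u v : Vb, WPS.dot2 Rbop T x y u v
      = L1 * WPS.Q2 gb T x y u v + L2 * WPS.Q2 Sb T x y u v := by
  obtain rfl : gV = WPS.sumForm gb fun ξ η => f * gf ξ η := funext₂ hgV
  obtain rfl :
      SV = WPS.sumForm (fun a b => Sb a b - q * T a b) fun ξ η => Sf ξ η + Ω * gf ξ η :=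
    funext₂ hSV
  obtain rfl : RV = WPS.warpedCurvature gf f Δ T Rb Rf := funext₂ fun X Y => funext₂ (hRV X Y)
  intro x y u v
  have : Nontrivial Vf := Module.nontrivial_of_finrank_pos (R := ℝ) (hdf ▸ hq)
  obtain ⟨ξ, η, hξη⟩ := hgfn.exists_ne_zero
  have hgf0 : ∀ ζ, f * gf 0 ζ = 0 := fun ζ => by rw [hgf.map_zero_left, mul_zero]
  have hSV0 : ∀ ζ, Sf 0 ζ + Ω * gf 0 ζ = 0 := fun ζ => by
    rw [WPS.ricci_eq_zero hgfn hSf fun _ _ => hRf.map_zero₂ .., hgf.map_zero_left, mul_zero,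
      add_zero]
  have hSb0 : ∀ a, Sb a 0 - q * T a 0 = 0 := fun a => by
    rw [WPS.ricci_eq_zero hgbn hSb fun _ _ => hRb.map_zero₃ .., hT.map_zero_right, mul_zero,
      sub_zero]
  have key := hmain (x, 0) (0, ξ) (y, 0) (0, η) (u, 0) (v, 0)
  rw [WPS.Q4, WPS.Q4,
    WPS.dot4_warpedCurvature_inl_inr hgf hT hRb hRf
      (WPS.curvatureOp_inl hgb hgbn hgf hgfn hf.ne' hRf hRbop hRop u v)
      (WPS.curvatureOp_inr hgb hgbn hgf hgfn hf.ne' hT hRb hRf hRop u v),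
    WPS.dot4_warpedCurvature_inl_inr hgf hT hRb hRf (WPS.wedge_sumForm_inl hgf0 u v)
      (WPS.wedge_sumForm_inr hgb.map_zero_right hgf0 u v),
    WPS.dot4_warpedCurvature_inl_inr hgf hT hRb hRf (WPS.wedge_sumForm_inl hSV0 u v)
      (WPS.wedge_sumForm_inr hSb0 hSV0 u v),
    ← WPS.Q2, ← WPS.Q2, WPS.Q2_sub_mul_self hT] at key
  exact mul_left_cancel₀ (mul_ne_zero hf.ne' hξη) (by linear_combination key)

theorem stmt4
    {Vb Vf : Type} [AddCommGroup Vb] [Module ℝ Vb] [FiniteDimensional ℝ Vb]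
    [AddCommGroup Vf] [Module ℝ Vf] [FiniteDimensional ℝ Vf]
    (p q : ℕ) (hp : 1 ≤ p) (hq : 1 ≤ q) (hn : 3 ≤ p + q)
    (hdb : Module.finrank ℝ Vb = p) (hdf : Module.finrank ℝ Vf = q)
    (gb : Vb → Vb → ℝ) (hgb : WPS.SymBilin gb) (hgbn : WPS.Nondeg gb)
    (gf : Vf → Vf → ℝ) (hgf : WPS.SymBilin gf) (hgfn : WPS.Nondeg gf)
    (f Δ : ℝ) (hf : 0 < f)
    (T : Vb → Vb → ℝ) (hT : WPS.SymBilin T)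
    (Tsh : Vb →ₗ[ℝ] Vb) (hTsh : ∀ x y, gb (Tsh x) y = T x y)
    (Ω : ℝ) (hΩ : Ω = -f * (((q : ℝ) - 1) * Δ + LinearMap.trace ℝ Vb Tsh))
    (Rb : Vb → Vb → Vb → Vb → ℝ) (hRb : WPS.Curv Rb)
    (Rf : Vf → Vf → Vf → Vf → ℝ) (hRf : WPS.Curv Rf)
    (Rbop : Vb → Vb → Vb → Vb) (hRbop : ∀ x y z w, gb (Rbop x y z) w = Rb x y z w)
    (Rfop : Vf → Vf → Vf → Vf) (hRfop : ∀ x y z w, gf (Rfop x y z) w = Rf x y z w)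
    (Sb : Vb → Vb → ℝ)
    (hSb : ∀ y z, ∃ E : Vb →ₗ[ℝ] Vb, (∀ x w, gb (E x) w = Rb x y z w) ∧
      Sb y z = LinearMap.trace ℝ Vb E)
    (Sf : Vf → Vf → ℝ)
    (hSf : ∀ y z, ∃ E : Vf →ₗ[ℝ] Vf, (∀ x w, gf (E x) w = Rf x y z w) ∧
      Sf y z = LinearMap.trace ℝ Vf E)
    (κf : ℝ)
    (hκf : ∃ E : Vf →ₗ[ℝ] Vf, (∀ x y, gf (E x) y = Sf x y) ∧
      κf = LinearMap.trace ℝ Vf E)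
    (gV : Vb × Vf → Vb × Vf → ℝ)
    (hgV : ∀ X Y, gV X Y = gb X.1 Y.1 + f * gf X.2 Y.2)
    (RV : Vb × Vf → Vb × Vf → Vb × Vf → Vb × Vf → ℝ)
    (hRV : ∀ X Y Z W, RV X Y Z W = Rb X.1 Y.1 Z.1 W.1
      + f * (T X.1 Z.1 * gf Y.2 W.2 + T Y.1 W.1 * gf X.2 Z.2
        - T X.1 W.1 * gf Y.2 Z.2 - T Y.1 Z.1 * gf X.2 W.2)
      + f * Rf X.2 Y.2 Z.2 W.2 - f ^ 2 * Δ * WPS.Gten gf X.2 Y.2 Z.2 W.2)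
    (SV : Vb × Vf → Vb × Vf → ℝ)
    (hSV : ∀ X Y, SV X Y = (Sb X.1 Y.1 - (q : ℝ) * T X.1 Y.1)
      + (Sf X.2 Y.2 + Ω * gf X.2 Y.2))
    (Rop : Vb × Vf → Vb × Vf → Vb × Vf → Vb × Vf)
    (hRop : ∀ X Y Z W, gV (Rop X Y Z) W = RV X Y Z W)
    (L1 L2 : ℝ)
    (hmain : (∀ X1 X2 X3 X4 X Y : Vb × Vf, WPS.dot4 Rop RV X1 X2 X3 X4 X Y
      = L1 * WPS.Q4 gV RV X1 X2 X3 X4 X Y + L2 * WPS.Q4 SV RV X1 X2 X3 X4 X Y)) :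
    ∀ x y u v : Vb, WPS.dot2 Rbop T x y u v
      = L1 * WPS.Q2 gb T x y u v + L2 * WPS.Q2 Sb T x y u v :=
  stmt4_general q hq hdf gb hgb hgbn gf hgf hgfn f Δ hf T hT Ω Rb hRb Rf hRf Rbop hRbop Sb hSb Sf
    hSf gV hgV RV hRV SV hSV Rop hRop L1 L2 hmain
end

section
/- With the pointwise warped-product curvature data of the setup, and reals L₁, L₂ with L₂ ≠ 0: if R·R = L₁ Q(g,R) + L₂ Q(S,R) holds on V (all operations taken with respect to g), then either R̄ = 0 (the base is flat at the point) or S̃ = (κ̃/q) g̃ (the fiber is Einstein at the point). -/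
namespace WPS
variable {V : Type} [AddCommGroup V] [Module ℝ V]

theorem symb_zl {A : V → V → ℝ} (h : SymBilin A) (y : V) : A 0 y = 0 := (h.2 y).map_zero
theorem symb_zr {A : V → V → ℝ} (h : SymBilin A) (x : V) : A x 0 = 0 := by
  rw [h.1]; exact symb_zl h x
theorem symb_sl {A : V → V → ℝ} (h : SymBilin A) (s : ℝ) (x y : V) :
    A (s • x) y = s * A x y := by
  have := (h.2 y).map_smul s x; simpa using this
theorem symb_sr {A : V → V → ℝ} (h : SymBilin A) (s : ℝ) (x y : V) :
    A x (s • y) = s * A x y := by rw [h.1, symb_sl h, h.1]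
theorem symb_subl {A : V → V → ℝ} (h : SymBilin A) (x y z : V) :
    A (x - y) z = A x z - A y z := (h.2 z).map_sub x y
theorem symb_subr {A : V → V → ℝ} (h : SymBilin A) (x y z : V) :
    A x (y - z) = A x y - A x z := by rw [h.1, symb_subl h, h.1, h.1 z]

theorem curv_z1 {R : V → V → V → V → ℝ} (h : Curv R) (y z w : V) : R 0 y z w = 0 :=
  (h.1 y z w).map_zero
theorem curv_z2 {R : V → V → V → V → ℝ} (h : Curv R) (x z w : V) : R x 0 z w = 0 :=
  (h.2.1 x z w).map_zero
theorem curv_z3 {R : V → V → V → V → ℝ} (h : Curv R) (x y w : V) : R x y 0 w = 0 :=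
  (h.2.2.1 x y w).map_zero
theorem curv_z4 {R : V → V → V → V → ℝ} (h : Curv R) (x y z : V) : R x y z 0 = 0 :=
  (h.2.2.2.1 x y z).map_zero
theorem curv_s1 {R : V → V → V → V → ℝ} (h : Curv R) (s : ℝ) (x y z w : V) :
    R (s • x) y z w = s * R x y z w := by have := (h.1 y z w).map_smul s x; simpa using this
theorem curv_s2 {R : V → V → V → V → ℝ} (h : Curv R) (s : ℝ) (x y z w : V) :
    R x (s • y) z w = s * R x y z w := by have := (h.2.1 x z w).map_smul s y; simpa using this
theorem curv_s3 {R : V → V → V → V → ℝ} (h : Curv R) (s : ℝ) (x y z w : V) :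
    R x y (s • z) w = s * R x y z w := by have := (h.2.2.1 x y w).map_smul s z; simpa using this
theorem curv_s4 {R : V → V → V → V → ℝ} (h : Curv R) (s : ℝ) (x y z w : V) :
    R x y z (s • w) = s * R x y z w := by have := (h.2.2.2.1 x y z).map_smul s w; simpa using this

theorem symb_negl {A : V → V → ℝ} (h : SymBilin A) (x y : V) : A (-x) y = -A x y :=
  (h.2 y).map_neg x
theorem symb_negr {A : V → V → ℝ} (h : SymBilin A) (x y : V) : A x (-y) = -A x y := by
  rw [h.1, symb_negl h, h.1]
theorem curv_n1 {R : V → V → V → V → ℝ} (h : Curv R) (x y z w : V) :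
    R (-x) y z w = -R x y z w := (h.1 y z w).map_neg x
theorem curv_n2 {R : V → V → V → V → ℝ} (h : Curv R) (x y z w : V) :
    R x (-y) z w = -R x y z w := (h.2.1 x z w).map_neg y
theorem curv_n3 {R : V → V → V → V → ℝ} (h : Curv R) (x y z w : V) :
    R x y (-z) w = -R x y z w := (h.2.2.1 x y w).map_neg z
theorem curv_n4 {R : V → V → V → V → ℝ} (h : Curv R) (x y z w : V) :
    R x y z (-w) = -R x y z w := (h.2.2.2.1 x y z).map_neg w
theorem curv_subl1 {R : V → V → V → V → ℝ} (h : Curv R) (x x' y z w : V) :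
    R (x - x') y z w = R x y z w - R x' y z w := (h.1 y z w).map_sub x x'
theorem curv_subl2 {R : V → V → V → V → ℝ} (h : Curv R) (x y y' z w : V) :
    R x (y - y') z w = R x y z w - R x y' z w := (h.2.1 x z w).map_sub y y'
theorem curv_subl3 {R : V → V → V → V → ℝ} (h : Curv R) (x y z z' w : V) :
    R x y (z - z') w = R x y z w - R x y z' w := (h.2.2.1 x y w).map_sub z z'
theorem curv_subl4 {R : V → V → V → V → ℝ} (h : Curv R) (x y z w w' : V) :
    R x y z (w - w') = R x y z w - R x y z w' := (h.2.2.2.1 x y z).map_sub w w'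
end WPS
theorem stmt6
    {Vb Vf : Type} [AddCommGroup Vb] [Module ℝ Vb] [FiniteDimensional ℝ Vb]
    [AddCommGroup Vf] [Module ℝ Vf] [FiniteDimensional ℝ Vf]
    (p q : ℕ) (hp : 1 ≤ p) (hq : 1 ≤ q) (hn : 3 ≤ p + q)
    (hdb : Module.finrank ℝ Vb = p) (hdf : Module.finrank ℝ Vf = q)
    (gb : Vb → Vb → ℝ) (hgb : WPS.SymBilin gb) (hgbn : WPS.Nondeg gb)
    (gf : Vf → Vf → ℝ) (hgf : WPS.SymBilin gf) (hgfn : WPS.Nondeg gf)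
    (f Δ : ℝ) (hf : 0 < f)
    (T : Vb → Vb → ℝ) (hT : WPS.SymBilin T)
    (Tsh : Vb →ₗ[ℝ] Vb) (hTsh : ∀ x y, gb (Tsh x) y = T x y)
    (Ω : ℝ) (hΩ : Ω = -f * (((q : ℝ) - 1) * Δ + LinearMap.trace ℝ Vb Tsh))
    (Rb : Vb → Vb → Vb → Vb → ℝ) (hRb : WPS.Curv Rb)
    (Rf : Vf → Vf → Vf → Vf → ℝ) (hRf : WPS.Curv Rf)
    (Rbop : Vb → Vb → Vb → Vb) (hRbop : ∀ x y z w, gb (Rbop x y z) w = Rb x y z w)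
    (Rfop : Vf → Vf → Vf → Vf) (hRfop : ∀ x y z w, gf (Rfop x y z) w = Rf x y z w)
    (Sb : Vb → Vb → ℝ)
    (hSb : ∀ y z, ∃ E : Vb →ₗ[ℝ] Vb, (∀ x w, gb (E x) w = Rb x y z w) ∧
      Sb y z = LinearMap.trace ℝ Vb E)
    (Sf : Vf → Vf → ℝ)
    (hSf : ∀ y z, ∃ E : Vf →ₗ[ℝ] Vf, (∀ x w, gf (E x) w = Rf x y z w) ∧
      Sf y z = LinearMap.trace ℝ Vf E)
    (κf : ℝ)
    (hκf : ∃ E : Vf →ₗ[ℝ] Vf, (∀ x y, gf (E x) y = Sf x y) ∧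
      κf = LinearMap.trace ℝ Vf E)
    (gV : Vb × Vf → Vb × Vf → ℝ)
    (hgV : ∀ X Y, gV X Y = gb X.1 Y.1 + f * gf X.2 Y.2)
    (RV : Vb × Vf → Vb × Vf → Vb × Vf → Vb × Vf → ℝ)
    (hRV : ∀ X Y Z W, RV X Y Z W = Rb X.1 Y.1 Z.1 W.1
      + f * (T X.1 Z.1 * gf Y.2 W.2 + T Y.1 W.1 * gf X.2 Z.2
        - T X.1 W.1 * gf Y.2 Z.2 - T Y.1 Z.1 * gf X.2 W.2)
      + f * Rf X.2 Y.2 Z.2 W.2 - f ^ 2 * Δ * WPS.Gten gf X.2 Y.2 Z.2 W.2)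
    (SV : Vb × Vf → Vb × Vf → ℝ)
    (hSV : ∀ X Y, SV X Y = (Sb X.1 Y.1 - (q : ℝ) * T X.1 Y.1)
      + (Sf X.2 Y.2 + Ω * gf X.2 Y.2))
    (Rop : Vb × Vf → Vb × Vf → Vb × Vf → Vb × Vf)
    (hRop : ∀ X Y Z W, gV (Rop X Y Z) W = RV X Y Z W)
    (L1 L2 : ℝ) (hL2 : L2 ≠ 0)
    (hmain : (∀ X1 X2 X3 X4 X Y : Vb × Vf, WPS.dot4 Rop RV X1 X2 X3 X4 X Y
      = L1 * WPS.Q4 gV RV X1 X2 X3 X4 X Y + L2 * WPS.Q4 SV RV X1 X2 X3 X4 X Y)) :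
    (∀ x y z w : Vb, Rb x y z w = 0) ∨ (∀ a b : Vf, Sf a b = (κf / (q : ℝ)) * gf a b) := by
  classical
  -- nondegeneracy of gV
  have hfne : f ≠ 0 := ne_of_gt hf
  have hgVn : ∀ X : Vb × Vf, (∀ Y, gV X Y = 0) → X = 0 := by
    intro X hX
    have h1 : X.1 = 0 := by
      apply hgbn; intro y
      have := hX (y, 0)
      rw [hgV] at this
      simpa [WPS.symb_zr hgf] using this
    have h2 : X.2 = 0 := by
      apply hgfn; intro b
      have := hX (0, b)
      rw [hgV] at this
      rw [WPS.symb_zr hgb] at this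
      have : f * gf X.2 b = 0 := by linarith
      exact (mul_eq_zero.mp this).resolve_left hfne
    exact Prod.ext h1 h2
  have hgVsub : ∀ P Q W : Vb × Vf, gV (P - Q) W = gV P W - gV Q W := by
    intro P Q W
    simp only [hgV, Prod.fst_sub, Prod.snd_sub, WPS.symb_subl hgb, WPS.symb_subl hgf]
    ring
  -- Rop on mixed arguments
  have rop1 : ∀ (w x : Vb) (c : Vf),
      Rop (w, (0:Vf)) ((0:Vb), c) (x, 0) = ((0:Vb), T w x • c) := by
    intro w x c
    have h0 : ∀ W, gV (Rop (w, (0:Vf)) ((0:Vb), c) (x, 0) - ((0:Vb), T w x • c)) W = 0 := by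
      intro W
      rw [hgVsub, hRop, hRV, hgV]
      simp [WPS.Gten, WPS.curv_z2 hRb, WPS.curv_z1 hRf, WPS.curv_z3 hRf,
        WPS.symb_zl hgf, WPS.symb_zr hgf, WPS.symb_zl hgb, WPS.symb_zr hT,
        WPS.symb_zl hT, WPS.symb_sl hgf]
    exact sub_eq_zero.mp (hgVn _ h0)
  have rop2 : ∀ (w : Vb) (c a : Vf),
      Rop (w, (0:Vf)) ((0:Vb), c) ((0:Vb), a) = ((-(f * gf c a)) • Tsh w, (0:Vf)) := by
    intro w c a
    have h0 : ∀ W, gV (Rop (w, (0:Vf)) ((0:Vb), c) ((0:Vb), a)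
        - ((-(f * gf c a)) • Tsh w, (0:Vf))) W = 0 := by
      intro W
      rw [hgVsub, hRop, hRV, hgV]
      simp [WPS.Gten, WPS.curv_z2 hRb, WPS.curv_z1 hRf,
        WPS.symb_zl hgf, WPS.symb_zr hgf, WPS.symb_zl hgb, WPS.symb_zr hT,
        WPS.symb_zl hT, WPS.symb_sl hgb, WPS.symb_negl hgb, hTsh]
      ring
    exact sub_eq_zero.mp (hgVn _ h0)
  -- zero facts for Sb, Sf
  have hSbz : ∀ (y z : Vb), (∀ x w, Rb x y z w = 0) → Sb y z = 0 := by
    intro y z h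
    obtain ⟨E, hE, htr⟩ := hSb y z
    have hE0 : E = 0 := by
      ext x
      exact hgbn (E x) (fun w => by rw [hE]; exact h x w)
    rw [htr, hE0, map_zero]
  have hSfz : ∀ (y z : Vf), (∀ x w, Rf x y z w = 0) → Sf y z = 0 := by
    intro y z h
    obtain ⟨E, hE, htr⟩ := hSf y z
    have hE0 : E = 0 := by
      ext x
      exact hgfn (E x) (fun w => by rw [hE]; exact h x w)
    rw [htr, hE0, map_zero]
  have hSbzl : ∀ z, Sb 0 z = 0 := fun z => hSbz 0 z (fun x w => WPS.curv_z2 hRb x z w)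
  have hSbzr : ∀ y, Sb y 0 = 0 := fun y => hSbz y 0 (fun x w => WPS.curv_z3 hRb x y w)
  have hSfzl : ∀ z, Sf 0 z = 0 := fun z => hSfz 0 z (fun x w => WPS.curv_z2 hRf x z w)
  have hSfzr : ∀ y, Sf y 0 = 0 := fun y => hSfz y 0 (fun x w => WPS.curv_z3 hRf x y w)
  -- the key scalar identity
  have key : ∀ (x y z w : Vb) (c a : Vf),
      L2 * Sf c a * Rb x y z w = gf c a *
        (-(f * (T y z * T w x - T x z * T w y + Rb x y z (Tsh w)))
          + L1 * f * (T x z * gb w y - T y z * gb w x - Rb x y z w)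
          + L2 * f * (T x z * (Sb w y - (q:ℝ) * T w y) - T y z * (Sb w x - (q:ℝ) * T w x))
          - L2 * Ω * Rb x y z w) := by
    intro x y z w c a
    have H := hmain (x, 0) (y, 0) (z, 0) (0, a) (w, 0) (0, c)
    simp only [WPS.dot4, WPS.Q4, WPS.wedge, rop1, rop2] at H
    simp only [hRV, hgV, hSV] at H
    simp only [Prod.fst_sub, Prod.snd_sub, Prod.smul_fst, Prod.smul_snd, smul_eq_mul,
      WPS.Gten, smul_zero, sub_zero, zero_sub,
      WPS.symb_zl hgb, WPS.symb_zr hgb, WPS.symb_zl hgf, WPS.symb_zr hgf,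
      WPS.symb_zl hT, WPS.symb_zr hT, hSbzl, hSbzr,
      hSfzl, hSfzr,
      WPS.curv_z1 hRb, WPS.curv_z2 hRb, WPS.curv_z3 hRb, WPS.curv_z4 hRb,
      WPS.curv_z1 hRf, WPS.curv_z2 hRf, WPS.curv_z3 hRf, WPS.curv_z4 hRf,
      WPS.symb_sl hgb, WPS.symb_sr hgb, WPS.symb_sl hgf, WPS.symb_sr hgf,
      WPS.symb_sl hT, WPS.symb_sr hT,
      WPS.symb_negl hgb, WPS.symb_negr hgb, WPS.symb_negl hgf, WPS.symb_negr hgf,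
      WPS.symb_negl hT, WPS.symb_negr hT,
      WPS.curv_s1 hRb, WPS.curv_s2 hRb, WPS.curv_s3 hRb, WPS.curv_s4 hRb,
      WPS.curv_n1 hRb, WPS.curv_n2 hRb, WPS.curv_n3 hRb, WPS.curv_n4 hRb,
      WPS.curv_s1 hRf, WPS.curv_s2 hRf, WPS.curv_s3 hRf, WPS.curv_s4 hRf,
      neg_zero, mul_zero, zero_mul, add_zero, zero_add, neg_neg, mul_neg, neg_mul,
      sub_self] at H
    linear_combination H
  by_cases hflat : ∀ x y z w : Vb, Rb x y z w = 0
  · exact Or.inl hflat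
  · right
    push_neg at hflat
    obtain ⟨x, y, z, w, hR0⟩ := hflat
    have hK : L2 * Rb x y z w ≠ 0 := mul_ne_zero hL2 hR0
    set Φ : ℝ := (-(f * (T y z * T w x - T x z * T w y + Rb x y z (Tsh w)))
          + L1 * f * (T x z * gb w y - T y z * gb w x - Rb x y z w)
          + L2 * f * (T x z * (Sb w y - (q:ℝ) * T w y) - T y z * (Sb w x - (q:ℝ) * T w x))
          - L2 * Ω * Rb x y z w) with hPhi
    set lam : ℝ := Φ / (L2 * Rb x y z w) with hlamdef
    have hlam : ∀ c a : Vf, Sf c a = lam * gf c a := by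
      intro c a
      rw [hlamdef, div_mul_eq_mul_div, eq_div_iff hK]
      linear_combination key x y z w c a
    obtain ⟨E, hE, htr⟩ := hκf
    have hEeq : E = lam • LinearMap.id := by
      ext v
      have h0 : ∀ u, gf (E v - lam • v) u = 0 := by
        intro u
        rw [WPS.symb_subl hgf, hE, hlam, WPS.symb_sl hgf]
        ring
      have := sub_eq_zero.mp (hgfn _ h0)
      simpa using this
    have hq0 : (q:ℝ) ≠ 0 := Nat.cast_ne_zero.mpr (by omega)
    have hκ : κf = lam * (q:ℝ) := by
      rw [htr, hEeq, map_smul, smul_eq_mul, LinearMap.trace_id, hdf]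
    intro a b
    rw [hlam a b, hκ, mul_div_assoc, div_self hq0, mul_one]
end

section
/- With the pointwise warped-product curvature data of the setup: R·R = 0 on V (operations taken with respect to g) if and only if (I) R̄·R̄ = 0; (II) T(x̄,w̄)T(ȳ,z̄) − T(x̄,z̄)T(ȳ,w̄) + R̄(x̄,ȳ,z̄,T♯w̄) = 0 for all x̄,ȳ,z̄,w̄ ∈ V̄; (III) T(x̄,ȳ)(R̃(w̃,x̃,ỹ,z̃) − fΔ G̃(w̃,x̃,ỹ,z̃)) + f T²(x̄,ȳ) G̃(w̃,x̃,ỹ,z̃) = 0 for all x̄,ȳ ∈ V̄ and x̃,ỹ,z̃,w̃ ∈ Ṽ; and (IV) R̃·R̃ = fΔ Q(g̃,R̃). -/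
theorem stmt7
    {Vb Vf : Type} [AddCommGroup Vb] [Module ℝ Vb] [FiniteDimensional ℝ Vb]
    [AddCommGroup Vf] [Module ℝ Vf] [FiniteDimensional ℝ Vf]
    (p q : ℕ) (hp : 1 ≤ p) (hq : 1 ≤ q) (hn : 3 ≤ p + q)
    (hdb : Module.finrank ℝ Vb = p) (hdf : Module.finrank ℝ Vf = q)
    (gb : Vb → Vb → ℝ) (hgb : WPS.SymBilin gb) (hgbn : WPS.Nondeg gb)
    (gf : Vf → Vf → ℝ) (hgf : WPS.SymBilin gf) (hgfn : WPS.Nondeg gf)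
    (f Δ : ℝ) (hf : 0 < f)
    (T : Vb → Vb → ℝ) (hT : WPS.SymBilin T)
    (Tsh : Vb →ₗ[ℝ] Vb) (hTsh : ∀ x y, gb (Tsh x) y = T x y)
    (Ω : ℝ) (hΩ : Ω = -f * (((q : ℝ) - 1) * Δ + LinearMap.trace ℝ Vb Tsh))
    (Rb : Vb → Vb → Vb → Vb → ℝ) (hRb : WPS.Curv Rb)
    (Rf : Vf → Vf → Vf → Vf → ℝ) (hRf : WPS.Curv Rf)
    (Rbop : Vb → Vb → Vb → Vb) (hRbop : ∀ x y z w, gb (Rbop x y z) w = Rb x y z w)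
    (Rfop : Vf → Vf → Vf → Vf) (hRfop : ∀ x y z w, gf (Rfop x y z) w = Rf x y z w)
    (Sb : Vb → Vb → ℝ)
    (hSb : ∀ y z, ∃ E : Vb →ₗ[ℝ] Vb, (∀ x w, gb (E x) w = Rb x y z w) ∧
      Sb y z = LinearMap.trace ℝ Vb E)
    (Sf : Vf → Vf → ℝ)
    (hSf : ∀ y z, ∃ E : Vf →ₗ[ℝ] Vf, (∀ x w, gf (E x) w = Rf x y z w) ∧
      Sf y z = LinearMap.trace ℝ Vf E)
    (κf : ℝ)
    (hκf : ∃ E : Vf →ₗ[ℝ] Vf, (∀ x y, gf (E x) y = Sf x y) ∧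
      κf = LinearMap.trace ℝ Vf E)
    (gV : Vb × Vf → Vb × Vf → ℝ)
    (hgV : ∀ X Y, gV X Y = gb X.1 Y.1 + f * gf X.2 Y.2)
    (RV : Vb × Vf → Vb × Vf → Vb × Vf → Vb × Vf → ℝ)
    (hRV : ∀ X Y Z W, RV X Y Z W = Rb X.1 Y.1 Z.1 W.1
      + f * (T X.1 Z.1 * gf Y.2 W.2 + T Y.1 W.1 * gf X.2 Z.2
        - T X.1 W.1 * gf Y.2 Z.2 - T Y.1 Z.1 * gf X.2 W.2)
      + f * Rf X.2 Y.2 Z.2 W.2 - f ^ 2 * Δ * WPS.Gten gf X.2 Y.2 Z.2 W.2)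
    (SV : Vb × Vf → Vb × Vf → ℝ)
    (hSV : ∀ X Y, SV X Y = (Sb X.1 Y.1 - (q : ℝ) * T X.1 Y.1)
      + (Sf X.2 Y.2 + Ω * gf X.2 Y.2))
    (Rop : Vb × Vf → Vb × Vf → Vb × Vf → Vb × Vf)
    (hRop : ∀ X Y Z W, gV (Rop X Y Z) W = RV X Y Z W)
    :
    (∀ X1 X2 X3 X4 X Y : Vb × Vf, WPS.dot4 Rop RV X1 X2 X3 X4 X Y
      = 0)
    ↔ ((∀ x y z w u v : Vb, WPS.dot4 Rbop Rb x y z w u v = 0)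
      ∧ (∀ x y z w : Vb, T x w * T y z - T x z * T y w + Rb x y z (Tsh w) = 0)
      ∧ (∀ (x y : Vb) (a b c d : Vf),
          T x y * (Rf d a b c - f * Δ * WPS.Gten gf d a b c)
            + f * T (Tsh x) y * WPS.Gten gf d a b c = 0)
      ∧ (∀ a b c d u v : Vf, WPS.dot4 Rfop Rf a b c d u v
          = f * Δ * WPS.Q4 gf Rf a b c d u v)) := by
  have hf' : f ≠ 0 := ne_of_gt hf
  have hgfs := hgf.1
  have hTs := hT.1
  have hgbs := hgb.1
  have hRb12 := hRb.2.2.2.2.1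
  have hRb34 := hRb.2.2.2.2.2.1
  have hRbpr := hRb.2.2.2.2.2.2.1
  have hRf12 := hRf.2.2.2.2.1
  have hRf34 := hRf.2.2.2.2.2.1
  have hRfpr := hRf.2.2.2.2.2.2.1
  -- linearity expansion lemmas
  have gb_a1 : ∀ x y z, gb (x + y) z = gb x z + gb y z := fun x y z => (hgb.2 z).map_add x y
  have gb_s1 : ∀ (c : ℝ) x z, gb (c • x) z = c * gb x z := fun c x z => by
    simpa using (hgb.2 z).map_smul c x
  have gb_b1 : ∀ x y z, gb (x - y) z = gb x z - gb y z := fun x y z => (hgb.2 z).map_sub x y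
  have gb_z1 : ∀ z, gb 0 z = 0 := fun z => (hgb.2 z).map_zero
  have gb_a2 : ∀ z x y, gb z (x + y) = gb z x + gb z y := fun z x y => by
    rw [hgbs z (x + y), hgbs z x, hgbs z y]; exact (hgb.2 z).map_add x y
  have gb_s2 : ∀ (c : ℝ) z x, gb z (c • x) = c * gb z x := fun c z x => by
    rw [hgbs z (c • x), hgbs z x]; simpa using (hgb.2 z).map_smul c x
  have gb_b2 : ∀ z x y, gb z (x - y) = gb z x - gb z y := fun z x y => by
    rw [hgbs z (x - y), hgbs z x, hgbs z y]; exact (hgb.2 z).map_sub x y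
  have gb_z2 : ∀ z, gb z 0 = 0 := fun z => by rw [hgbs z 0]; exact (hgb.2 z).map_zero
  have gf_a1 : ∀ x y z, gf (x + y) z = gf x z + gf y z := fun x y z => (hgf.2 z).map_add x y
  have gf_s1 : ∀ (c : ℝ) x z, gf (c • x) z = c * gf x z := fun c x z => by
    simpa using (hgf.2 z).map_smul c x
  have gf_b1 : ∀ x y z, gf (x - y) z = gf x z - gf y z := fun x y z => (hgf.2 z).map_sub x y
  have gf_z1 : ∀ z, gf 0 z = 0 := fun z => (hgf.2 z).map_zero
  have gf_a2 : ∀ z x y, gf z (x + y) = gf z x + gf z y := fun z x y => by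
    rw [hgfs z (x + y), hgfs z x, hgfs z y]; exact (hgf.2 z).map_add x y
  have gf_s2 : ∀ (c : ℝ) z x, gf z (c • x) = c * gf z x := fun c z x => by
    rw [hgfs z (c • x), hgfs z x]; simpa using (hgf.2 z).map_smul c x
  have gf_b2 : ∀ z x y, gf z (x - y) = gf z x - gf z y := fun z x y => by
    rw [hgfs z (x - y), hgfs z x, hgfs z y]; exact (hgf.2 z).map_sub x y
  have gf_z2 : ∀ z, gf z 0 = 0 := fun z => by rw [hgfs z 0]; exact (hgf.2 z).map_zero
  have T_a1 : ∀ x y z, T (x + y) z = T x z + T y z := fun x y z => (hT.2 z).map_add x y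
  have T_s1 : ∀ (c : ℝ) x z, T (c • x) z = c * T x z := fun c x z => by
    simpa using (hT.2 z).map_smul c x
  have T_b1 : ∀ x y z, T (x - y) z = T x z - T y z := fun x y z => (hT.2 z).map_sub x y
  have T_z1 : ∀ z, T 0 z = 0 := fun z => (hT.2 z).map_zero
  have T_a2 : ∀ z x y, T z (x + y) = T z x + T z y := fun z x y => by
    rw [hTs z (x + y), hTs z x, hTs z y]; exact (hT.2 z).map_add x y
  have T_s2 : ∀ (c : ℝ) z x, T z (c • x) = c * T z x := fun c z x => by
    rw [hTs z (c • x), hTs z x]; simpa using (hT.2 z).map_smul c x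
  have T_b2 : ∀ z x y, T z (x - y) = T z x - T z y := fun z x y => by
    rw [hTs z (x - y), hTs z x, hTs z y]; exact (hT.2 z).map_sub x y
  have T_z2 : ∀ z, T z 0 = 0 := fun z => by rw [hTs z 0]; exact (hT.2 z).map_zero
  have Rb_a1 : ∀ x x' y z w, Rb (x + x') y z w = Rb x y z w + Rb x' y z w :=
    fun x x' y z w => (hRb.1 y z w).map_add x x'
  have Rb_s1 : ∀ (c : ℝ) x y z w, Rb (c • x) y z w = c * Rb x y z w :=
    fun c x y z w => by simpa using (hRb.1 y z w).map_smul c x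
  have Rb_b1 : ∀ x x' y z w, Rb (x - x') y z w = Rb x y z w - Rb x' y z w :=
    fun x x' y z w => (hRb.1 y z w).map_sub x x'
  have Rb_z1 : ∀ y z w, Rb 0 y z w = 0 := fun y z w => (hRb.1 y z w).map_zero
  have Rb_a2 : ∀ x y y' z w, Rb x (y + y') z w = Rb x y z w + Rb x y' z w :=
    fun x y y' z w => (hRb.2.1 x z w).map_add y y'
  have Rb_s2 : ∀ (c : ℝ) x y z w, Rb x (c • y) z w = c * Rb x y z w :=
    fun c x y z w => by simpa using (hRb.2.1 x z w).map_smul c y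
  have Rb_b2 : ∀ x y y' z w, Rb x (y - y') z w = Rb x y z w - Rb x y' z w :=
    fun x y y' z w => (hRb.2.1 x z w).map_sub y y'
  have Rb_z2 : ∀ x z w, Rb x 0 z w = 0 := fun x z w => (hRb.2.1 x z w).map_zero
  have Rb_a3 : ∀ x y z z' w, Rb x y (z + z') w = Rb x y z w + Rb x y z' w :=
    fun x y z z' w => (hRb.2.2.1 x y w).map_add z z'
  have Rb_s3 : ∀ (c : ℝ) x y z w, Rb x y (c • z) w = c * Rb x y z w :=
    fun c x y z w => by simpa using (hRb.2.2.1 x y w).map_smul c z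
  have Rb_b3 : ∀ x y z z' w, Rb x y (z - z') w = Rb x y z w - Rb x y z' w :=
    fun x y z z' w => (hRb.2.2.1 x y w).map_sub z z'
  have Rb_z3 : ∀ x y w, Rb x y 0 w = 0 := fun x y w => (hRb.2.2.1 x y w).map_zero
  have Rb_a4 : ∀ x y z w w', Rb x y z (w + w') = Rb x y z w + Rb x y z w' :=
    fun x y z w w' => (hRb.2.2.2.1 x y z).map_add w w'
  have Rb_s4 : ∀ (c : ℝ) x y z w, Rb x y z (c • w) = c * Rb x y z w :=
    fun c x y z w => by simpa using (hRb.2.2.2.1 x y z).map_smul c w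
  have Rb_b4 : ∀ x y z w w', Rb x y z (w - w') = Rb x y z w - Rb x y z w' :=
    fun x y z w w' => (hRb.2.2.2.1 x y z).map_sub w w'
  have Rb_z4 : ∀ x y z, Rb x y z 0 = 0 := fun x y z => (hRb.2.2.2.1 x y z).map_zero
  have Rf_a1 : ∀ x x' y z w, Rf (x + x') y z w = Rf x y z w + Rf x' y z w :=
    fun x x' y z w => (hRf.1 y z w).map_add x x'
  have Rf_s1 : ∀ (c : ℝ) x y z w, Rf (c • x) y z w = c * Rf x y z w :=
    fun c x y z w => by simpa using (hRf.1 y z w).map_smul c x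
  have Rf_b1 : ∀ x x' y z w, Rf (x - x') y z w = Rf x y z w - Rf x' y z w :=
    fun x x' y z w => (hRf.1 y z w).map_sub x x'
  have Rf_z1 : ∀ y z w, Rf 0 y z w = 0 := fun y z w => (hRf.1 y z w).map_zero
  have Rf_a2 : ∀ x y y' z w, Rf x (y + y') z w = Rf x y z w + Rf x y' z w :=
    fun x y y' z w => (hRf.2.1 x z w).map_add y y'
  have Rf_s2 : ∀ (c : ℝ) x y z w, Rf x (c • y) z w = c * Rf x y z w :=
    fun c x y z w => by simpa using (hRf.2.1 x z w).map_smul c y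
  have Rf_b2 : ∀ x y y' z w, Rf x (y - y') z w = Rf x y z w - Rf x y' z w :=
    fun x y y' z w => (hRf.2.1 x z w).map_sub y y'
  have Rf_z2 : ∀ x z w, Rf x 0 z w = 0 := fun x z w => (hRf.2.1 x z w).map_zero
  have Rf_a3 : ∀ x y z z' w, Rf x y (z + z') w = Rf x y z w + Rf x y z' w :=
    fun x y z z' w => (hRf.2.2.1 x y w).map_add z z'
  have Rf_s3 : ∀ (c : ℝ) x y z w, Rf x y (c • z) w = c * Rf x y z w :=
    fun c x y z w => by simpa using (hRf.2.2.1 x y w).map_smul c z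
  have Rf_b3 : ∀ x y z z' w, Rf x y (z - z') w = Rf x y z w - Rf x y z' w :=
    fun x y z z' w => (hRf.2.2.1 x y w).map_sub z z'
  have Rf_z3 : ∀ x y w, Rf x y 0 w = 0 := fun x y w => (hRf.2.2.1 x y w).map_zero
  have Rf_a4 : ∀ x y z w w', Rf x y z (w + w') = Rf x y z w + Rf x y z w' :=
    fun x y z w w' => (hRf.2.2.2.1 x y z).map_add w w'
  have Rf_s4 : ∀ (c : ℝ) x y z w, Rf x y z (c • w) = c * Rf x y z w :=
    fun c x y z w => by simpa using (hRf.2.2.2.1 x y z).map_smul c w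
  have Rf_b4 : ∀ x y z w w', Rf x y z (w - w') = Rf x y z w - Rf x y z w' :=
    fun x y z w w' => (hRf.2.2.2.1 x y z).map_sub w w'
  have Rf_z4 : ∀ x y z, Rf x y z 0 = 0 := fun x y z => (hRf.2.2.2.1 x y z).map_zero
  have gb_n1 : ∀ x z, gb (-x) z = -gb x z := fun x z => (hgb.2 z).map_neg x
  have gb_n2 : ∀ z x, gb z (-x) = -gb z x := fun z x => by
    rw [hgbs z (-x), hgbs z x]; exact (hgb.2 z).map_neg x
  have gf_n1 : ∀ x z, gf (-x) z = -gf x z := fun x z => (hgf.2 z).map_neg x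
  have gf_n2 : ∀ z x, gf z (-x) = -gf z x := fun z x => by
    rw [hgfs z (-x), hgfs z x]; exact (hgf.2 z).map_neg x
  have T_n1 : ∀ x z, T (-x) z = -T x z := fun x z => (hT.2 z).map_neg x
  have T_n2 : ∀ z x, T z (-x) = -T z x := fun z x => by
    rw [hTs z (-x), hTs z x]; exact (hT.2 z).map_neg x
  have Rb_n1 : ∀ x y z w, Rb (-x) y z w = -Rb x y z w := fun x y z w => (hRb.1 y z w).map_neg x
  have Rb_n2 : ∀ x y z w, Rb x (-y) z w = -Rb x y z w := fun x y z w => (hRb.2.1 x z w).map_neg y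
  have Rb_n3 : ∀ x y z w, Rb x y (-z) w = -Rb x y z w := fun x y z w => (hRb.2.2.1 x y w).map_neg z
  have Rb_n4 : ∀ x y z w, Rb x y z (-w) = -Rb x y z w := fun x y z w => (hRb.2.2.2.1 x y z).map_neg w
  have Rf_n1 : ∀ x y z w, Rf (-x) y z w = -Rf x y z w := fun x y z w => (hRf.1 y z w).map_neg x
  have Rf_n2 : ∀ x y z w, Rf x (-y) z w = -Rf x y z w := fun x y z w => (hRf.2.1 x z w).map_neg y
  have Rf_n3 : ∀ x y z w, Rf x y (-z) w = -Rf x y z w := fun x y z w => (hRf.2.2.1 x y w).map_neg z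
  have Rf_n4 : ∀ x y z w, Rf x y z (-w) = -Rf x y z w := fun x y z w => (hRf.2.2.2.1 x y z).map_neg w
  -- derived bridging lemmas
  have hRfop2 : ∀ x y z w, gf w (Rfop x y z) = Rf x y z w :=
    fun x y z w => (hgfs w (Rfop x y z)).trans (hRfop x y z w)
  have hTRbop2 : ∀ x y z w, T w (Rbop x y z) = Rb x y z (Tsh w) := by
    intro x y z w
    rw [← hTsh w (Rbop x y z), hgbs, hRbop]
  have hTRbop1 : ∀ x y z w, T (Rbop x y z) w = Rb x y z (Tsh w) := by
    intro x y z w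
    rw [hTs (Rbop x y z) w, hTRbop2]
  -- zero lemmas for the curvature operators
  have hRfop0a : ∀ b c, Rfop 0 b c = 0 := fun b c =>
    hgfn _ fun w => by rw [hRfop]; exact Rf_z1 b c w
  have hRfop0b : ∀ a c, Rfop a 0 c = 0 := fun a c =>
    hgfn _ fun w => by rw [hRfop]; exact Rf_z2 a c w
  have hRfop0c : ∀ a b, Rfop a b 0 = 0 := fun a b =>
    hgfn _ fun w => by rw [hRfop]; exact Rf_z3 a b w
  have hRbop0a : ∀ b c, Rbop 0 b c = 0 := fun b c =>
    hgbn _ fun w => by rw [hRbop]; exact Rb_z1 b c w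
  have hRbop0b : ∀ a c, Rbop a 0 c = 0 := fun a c =>
    hgbn _ fun w => by rw [hRbop]; exact Rb_z2 a c w
  have hRbop0c : ∀ a b, Rbop a b 0 = 0 := fun a b =>
    hgbn _ fun w => by rw [hRbop]; exact Rb_z3 a b w
  -- gV separates points
  have gVext : ∀ A B : Vb × Vf, (∀ W, gV A W = gV B W) → A = B := by
    rintro ⟨A1, A2⟩ ⟨B1, B2⟩ hAB
    have h1 : A1 = B1 := by
      have h0 : A1 - B1 = 0 := by
        apply hgbn
        intro w
        have := hAB (w, 0)
        rw [hgV, hgV] at this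
        simp only [gf_z2, mul_zero, add_zero] at this
        rw [gb_b1, this, sub_self]
      have := sub_eq_zero.mp h0; exact this
    have h2 : A2 = B2 := by
      have h0 : A2 - B2 = 0 := by
        apply hgfn
        intro w
        have := hAB (0, w)
        rw [hgV, hgV] at this
        simp only [gb_z2, zero_add] at this
        have h3 := mul_left_cancel₀ hf' this
        rw [gf_b1, h3, sub_self]
      exact sub_eq_zero.mp h0
    simp only [Prod.mk.injEq]
    exact ⟨h1, h2⟩
  -- explicit formula for the curvature operator of the warped metric
  have hRopE : ∀ X Y Z : Vb × Vf, Rop X Y Z =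
      (Rbop X.1 Y.1 Z.1 + (f * gf X.2 Z.2) • Tsh Y.1 - (f * gf Y.2 Z.2) • Tsh X.1,
       T X.1 Z.1 • Y.2 - T Y.1 Z.1 • X.2 + Rfop X.2 Y.2 Z.2
         - (f * Δ) • (gf Y.2 Z.2 • X.2 - gf X.2 Z.2 • Y.2)) := by
    intro X Y Z
    apply gVext
    intro W
    rw [hRop, hRV, hgV]
    simp only [gb_a1, gb_s1, gb_b1, gb_z1, gb_a2, gb_s2, gb_b2, gb_z2, gf_a1, gf_s1, gf_b1, gf_z1, gf_a2, gf_s2, gf_b2, gf_z2, T_a1, T_s1, T_b1, T_z1, T_a2, T_s2, T_b2, T_z2, Rb_a1, Rb_s1, Rb_b1, Rb_z1, Rb_a2, Rb_s2, Rb_b2, Rb_z2, Rb_a3, Rb_s3, Rb_b3, Rb_z3, Rb_a4, Rb_s4, Rb_b4, Rb_z4, Rf_a1, Rf_s1, Rf_b1, Rf_z1, Rf_a2, Rf_s2, Rf_b2, Rf_z2, Rf_a3, Rf_s3, Rf_b3, Rf_z3, Rf_a4, Rf_s4, Rf_b4, Rf_z4, smul_eq_mul, smul_zero, zero_smul, map_zero,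 hRfop0a, hRfop0b, hRfop0c, hRbop0a, hRbop0b, hRbop0c, mul_zero, zero_mul, add_zero, zero_add, sub_zero, zero_sub, neg_zero, gb_n1, gb_n2, gf_n1, gf_n2, T_n1, T_n2, Rb_n1, Rb_n2, Rb_n3, Rb_n4, Rf_n1, Rf_n2, Rf_n3, Rf_n4, hTsh, hRbop, hRfop, hRfop2, WPS.Gten]
    ring
  constructor
  · -- forward direction
    intro h
    refine ⟨?_, ?_, ?_, ?_⟩
    · -- condition (I)
      intro x y z w u v
      have e := h (x, 0) (y, 0) (z, 0) (w, 0) (u, 0) (v, 0)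
      simp only [WPS.dot4, hRopE, hRV, WPS.Gten, gb_a1, gb_s1, gb_b1, gb_z1, gb_a2, gb_s2, gb_b2, gb_z2, gf_a1, gf_s1, gf_b1, gf_z1, gf_a2, gf_s2, gf_b2, gf_z2, T_a1, T_s1, T_b1, T_z1, T_a2, T_s2, T_b2, T_z2, Rb_a1, Rb_s1, Rb_b1, Rb_z1, Rb_a2, Rb_s2, Rb_b2, Rb_z2, Rb_a3, Rb_s3, Rb_b3, Rb_z3, Rb_a4, Rb_s4, Rb_b4, Rb_z4, Rf_a1, Rf_s1, Rf_b1, Rf_z1, Rf_a2, Rf_s2, Rf_b2, Rf_z2, Rf_a3, Rf_s3, Rf_b3, Rf_z3, Rf_a4, Rf_s4, Rf_b4, Rf_z4, smul_eq_mul, smul_zero, zero_smul, map_zero, hRfop0a, hRfop0b, hRfop0c, hRbop0a, hRbop0b, hRbop0c, mul_zero, zero_mul, add_zero, zero_add, sub_zero, zero_sub, neg_zero, gb_n1, gb_n2, gf_n1, gf_n2, T_n1, T_n2, Rb_n1, Rb_n2, Rb_n3, Rb_n4, Rf_n1, Rf_n2, Rf_n3, Rf_n4] at e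
      simp only [WPS.dot4]
      linear_combination e
    · -- condition (II)
      intro x y z w
      have hq0 : 0 < Module.finrank ℝ Vf := by rw [hdf]; omega
      have : Nontrivial Vf := Module.nontrivial_of_finrank_pos hq0
      obtain ⟨a, ha⟩ := exists_ne (0 : Vf)
      have hb : ¬ ∀ b, gf a b = 0 := fun hall => ha (hgfn a hall)
      push_neg at hb
      obtain ⟨b, hab⟩ := hb
      have e := h (x, 0) (y, 0) (z, 0) (0, a) (w, 0) (0, b)
      simp only [WPS.dot4, hRopE, hRV, WPS.Gten, gb_a1, gb_s1, gb_b1, gb_z1, gb_a2, gb_s2, gb_b2, gb_z2, gf_a1, gf_s1, gf_b1, gf_z1, gf_a2, gf_s2, gf_b2, gf_z2, T_a1, T_s1, T_b1, T_z1, T_a2, T_s2, T_b2, T_z2, Rb_a1, Rb_s1, Rb_b1, Rb_z1, Rb_a2, Rb_s2, Rb_b2, Rb_z2, Rb_a3, Rb_s3, Rb_b3, Rb_z3, Rb_a4, Rb_s4, Rb_b4, Rb_z4, Rf_a1, Rf_s1, Rf_b1, Rf_z1, Rf_a2, Rf_s2, Rf_b2, Rf_z2, Rf_a3, Rf_s3,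 Rf_b3, Rf_z3, Rf_a4, Rf_s4, Rf_b4, Rf_z4, smul_eq_mul, smul_zero, zero_smul, map_zero, hRfop0a, hRfop0b, hRfop0c, hRbop0a, hRbop0b, hRbop0c, mul_zero, zero_mul, add_zero, zero_add, sub_zero, zero_sub, neg_zero, gb_n1, gb_n2, gf_n1, gf_n2, T_n1, T_n2, Rb_n1, Rb_n2, Rb_n3, Rb_n4, Rf_n1, Rf_n2, Rf_n3, Rf_n4] at e
      have key : f * gf a b * (T x w * T y z - T x z * T y w + Rb x y z (Tsh w)) = 0 := by
        linear_combination e - (((T y z)*(f)*(gf b a)) * (hTs w x) + ((-1)*(T x z)*(f)*(gf b a)) * (hTs w y) + ((Rb x y z (Tsh w))*(f) + (T x w)*(T y z)*(f) + (-1)*(T x z)*(T y w)*(f)) * (hgfs b a))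
      exact (mul_eq_zero.mp key).resolve_left (mul_ne_zero hf' hab)
    · -- condition (III)
      intro x y a b c d
      simp only [WPS.Gten]
      have e := h (y, 0) (0, d) (0, b) (0, c) (x, 0) (0, a)
      simp only [WPS.dot4, hRopE, hRV, WPS.Gten, gb_a1, gb_s1, gb_b1, gb_z1, gb_a2, gb_s2, gb_b2, gb_z2, gf_a1, gf_s1, gf_b1, gf_z1, gf_a2, gf_s2, gf_b2, gf_z2, T_a1, T_s1, T_b1, T_z1, T_a2, T_s2, T_b2, T_z2, Rb_a1, Rb_s1, Rb_b1, Rb_z1, Rb_a2, Rb_s2, Rb_b2, Rb_z2, Rb_a3, Rb_s3, Rb_b3, Rb_z3, Rb_a4, Rb_s4, Rb_b4, Rb_z4, Rf_a1, Rf_s1, Rf_b1, Rf_z1, Rf_a2, Rf_s2, Rf_b2, Rf_z2, Rf_a3, Rf_s3, Rf_b3, Rf_z3, Rf_a4, Rf_s4, Rf_b4, Rf_z4, smul_eq_mul, smul_zero, zero_smul, map_zero, hRfop0a, hRfop0b, hRfop0c, hRbop0a, hRbop0b, hRbop0c, mul_zero, zero_mul, add_zero, zero_add, sub_zero, zero_sub,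 neg_zero, gb_n1, gb_n2, gf_n1, gf_n2, T_n1, T_n2, Rb_n1, Rb_n2, Rb_n3, Rb_n4, Rf_n1, Rf_n2, Rf_n3, Rf_n4] at e
      have key : f * (T x y * (Rf d a b c - f * Δ * (gf d c * gf a b - gf d b * gf a c))
          + f * T (Tsh x) y * (gf d c * gf a b - gf d b * gf a c)) = 0 := by
        linear_combination e - (((-1)*(T x y)*(f)) * (hRf12 a d b c) + ((f)*(f)*(gf d b)*(gf a c) + (-1)*(f)*(f)*(gf d c)*(gf a b)) * (hTs (Tsh x) y))
      exact (mul_eq_zero.mp key).resolve_left hf'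
    · -- condition (IV)
      intro a b c d u v
      have e := h (0, a) (0, b) (0, c) (0, d) (0, u) (0, v)
      simp only [WPS.dot4, hRopE, hRV, WPS.Gten, gb_a1, gb_s1, gb_b1, gb_z1, gb_a2, gb_s2, gb_b2, gb_z2, gf_a1, gf_s1, gf_b1, gf_z1, gf_a2, gf_s2, gf_b2, gf_z2, T_a1, T_s1, T_b1, T_z1, T_a2, T_s2, T_b2, T_z2, Rb_a1, Rb_s1, Rb_b1, Rb_z1, Rb_a2, Rb_s2, Rb_b2, Rb_z2, Rb_a3, Rb_s3, Rb_b3, Rb_z3, Rb_a4, Rb_s4, Rb_b4, Rb_z4, Rf_a1, Rf_s1, Rf_b1, Rf_z1, Rf_a2, Rf_s2, Rf_b2, Rf_z2, Rf_a3, Rf_s3, Rf_b3, Rf_z3, Rf_a4, Rf_s4, Rf_b4, Rf_z4, smul_eq_mul, smul_zero, zero_smul, map_zero, hRfop0a, hRfop0b, hRfop0c, hRbop0a, hRbop0b, hRbop0c, mul_zero, zero_mul, add_zero, zero_add, sub_zero, zero_sub, neg_zero, gb_n1, gb_n2, gf_n1, gf_n2, T_n1, T_n2, Rb_n1, Rb_n2,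 Rb_n3, Rb_n4, Rf_n1, Rf_n2, Rf_n3, Rf_n4] at e
      have key : f * ((Δ)*(Rf a b c u)*(f)*(gf v d) + (-1)*(Δ)*(Rf a b c v)*(f)*(gf u d) + (Δ)*(Rf a b u d)*(f)*(gf v c) + (-1)*(Δ)*(Rf a b v d)*(f)*(gf u c) + (Δ)*(Rf a u c d)*(f)*(gf v b) + (-1)*(Δ)*(Rf a v c d)*(f)*(gf u b) + (Δ)*(Rf u b c d)*(f)*(gf v a) + (-1)*(Δ)*(Rf v b c d)*(f)*(gf u a) + (-1)*(Rf (Rfop u v a) b c d) + (-1)*(Rf a (Rfop u v b) c d) + (-1)*(Rf a b (Rfop u v c) d) + (-1)*(Rf a b c (Rfop u v d))) = 0 := by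
        linear_combination e - (((Δ)*(f)*(f)*(gf b c)) * (hRfop u v a d) + ((-1)*(Δ)*(Δ)*(f)*(f)*(f)*(gf a c)*(gf b v) + (Δ)*(Δ)*(f)*(f)*(f)*(gf a c)*(gf v b) + (Δ)*(Δ)*(f)*(f)*(f)*(gf a v)*(gf b c) + (-1)*(Δ)*(Δ)*(f)*(f)*(f)*(gf b c)*(gf v a)) * (hgfs u d) + ((Δ)*(Δ)*(f)*(f)*(f)*(gf b c)*(gf v d) + (-1)*(Δ)*(Δ)*(f)*(f)*(f)*(gf b d)*(gf v c)) * (hgfs u a) + ((-1)*(Δ)*(f)*(f)*(gf b d)) * (hRfop u v a c) + ((Δ)*(Δ)*(f)*(f)*(f)*(gf a d)*(gf b v) + (-1)*(Δ)*(Δ)*(f)*(f)*(f)*(gf a d)*(gf v b) + (-1)*(Δ)*(Δ)*(f)*(f)*(f)*(gf a v)*(gf b d) + (Δ)*(Δ)*(f)*(f)*(f)*(gf b d)*(gf v a)) * (hgfs u c) + ((Δ)*(f)*(f)*(gf a d)) * (hRfop u v b c) + ((-1)*(Δ)*(Δ)*(f)*(f)*(f)*(gf a c)*(gf v d) + (Δ)*(Δ)*(f)*(f)*(f)*(gf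 a d)*(gf v c)) * (hgfs u b) + ((-1)*(Δ)*(f)*(f)*(gf a c)) * (hRfop u v b d) + ((Δ)*(f)*(f)*(gf a d)) * (hRfop2 u v c b) + ((-1)*(Δ)*(f)*(f)*(gf b d)) * (hRfop2 u v c a) + ((Δ)*(f)*(f)*(gf b c)) * (hRfop2 u v d a) + ((-1)*(Δ)*(f)*(f)*(gf a c)) * (hRfop2 u v d b) + ((-1)*(Δ)*(Δ)*(f)*(f)*(f)*(gf b c)*(gf d u) + (Δ)*(Δ)*(f)*(f)*(f)*(gf b d)*(gf c u)) * (hgfs v a) + ((Δ)*(Δ)*(f)*(f)*(f)*(gf a c)*(gf d u) + (-1)*(Δ)*(Δ)*(f)*(f)*(f)*(gf a d)*(gf c u)) * (hgfs v b) + ((Δ)*(f)*(f)*(gf a d)) * (hRf34 u v c b) + ((-1)*(Δ)*(f)*(f)*(gf b d)) * (hRf34 u v c a) + ((Δ)*(f)*(f)*(gf b c)) * (hRf34 u v d a) + ((-1)*(Δ)*(f)*(f)*(gf a c)) * (hRf34 u v d b))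
      have h0 := (mul_eq_zero.mp key).resolve_left hf'
      simp only [WPS.dot4, WPS.Q4, WPS.wedge, gb_a1, gb_s1, gb_b1, gb_z1, gb_a2, gb_s2, gb_b2, gb_z2, gf_a1, gf_s1, gf_b1, gf_z1, gf_a2, gf_s2, gf_b2, gf_z2, T_a1, T_s1, T_b1, T_z1, T_a2, T_s2, T_b2, T_z2, Rb_a1, Rb_s1, Rb_b1, Rb_z1, Rb_a2, Rb_s2, Rb_b2, Rb_z2, Rb_a3, Rb_s3, Rb_b3, Rb_z3, Rb_a4, Rb_s4, Rb_b4, Rb_z4, Rf_a1, Rf_s1, Rf_b1, Rf_z1, Rf_a2, Rf_s2, Rf_b2, Rf_z2, Rf_a3, Rf_s3, Rf_b3, Rf_z3, Rf_a4, Rf_s4, Rf_b4, Rf_z4, smul_eq_mul, smul_zero, zero_smul, map_zero, hRfop0a, hRfop0b, hRfop0c, hRbop0a, hRbop0b, hRbop0c, mul_zero, zero_mul, add_zero, zero_add, sub_zero, zero_sub, neg_zero, gb_n1, gb_n2, gf_n1, gf_n2, T_n1, T_n2, Rb_n1, Rb_n2, Rb_n3, Rb_n4, Rf_n1, Rf_n2,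 Rf_n3, Rf_n4]
      linear_combination h0
  · -- backward direction
    rintro ⟨h1, h2, h3, h4⟩ X1 X2 X3 X4 X Y
    simp only [WPS.Gten] at h3
    have e1 := h1 X1.1 X2.1 X3.1 X4.1 X.1 Y.1
    have e4 := h4 X1.2 X2.2 X3.2 X4.2 X.2 Y.2
    simp only [WPS.dot4] at e1
    simp only [WPS.dot4, WPS.Q4, WPS.wedge, gb_a1, gb_s1, gb_b1, gb_z1, gb_a2, gb_s2, gb_b2, gb_z2, gf_a1, gf_s1, gf_b1, gf_z1, gf_a2, gf_s2, gf_b2, gf_z2, T_a1, T_s1, T_b1, T_z1, T_a2, T_s2, T_b2, T_z2, Rb_a1, Rb_s1, Rb_b1, Rb_z1, Rb_a2, Rb_s2, Rb_b2, Rb_z2, Rb_a3, Rb_s3, Rb_b3, Rb_z3, Rb_a4, Rb_s4, Rb_b4, Rb_z4, Rf_a1, Rf_s1, Rf_b1, Rf_z1, Rf_a2, Rf_s2, Rf_b2, Rf_z2, Rf_a3, Rf_s3, Rf_b3, Rf_z3, Rf_a4, Rf_s4, Rf_b4, Rf_z4, smul_eq_mul, smul_zero, zero_smul, map_zero, hRfop0a,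 hRfop0b, hRfop0c, hRbop0a, hRbop0b, hRbop0c, mul_zero, zero_mul, add_zero, zero_add, sub_zero, zero_sub, neg_zero, gb_n1, gb_n2, gf_n1, gf_n2, T_n1, T_n2, Rb_n1, Rb_n2, Rb_n3, Rb_n4, Rf_n1, Rf_n2, Rf_n3, Rf_n4] at e4
    simp only [WPS.dot4, hRopE, hRV, WPS.Gten, gb_a1, gb_s1, gb_b1, gb_z1, gb_a2, gb_s2, gb_b2, gb_z2, gf_a1, gf_s1, gf_b1, gf_z1, gf_a2, gf_s2, gf_b2, gf_z2, T_a1, T_s1, T_b1, T_z1, T_a2, T_s2, T_b2, T_z2, Rb_a1, Rb_s1, Rb_b1, Rb_z1, Rb_a2, Rb_s2, Rb_b2, Rb_z2, Rb_a3, Rb_s3, Rb_b3, Rb_z3, Rb_a4, Rb_s4, Rb_b4, Rb_z4, Rf_a1, Rf_s1, Rf_b1, Rf_z1, Rf_a2, Rf_s2, Rf_b2, Rf_z2, Rf_a3, Rf_s3, Rf_b3, Rf_z3, Rf_a4, Rf_s4, Rf_b4, Rf_z4, smul_eq_mul, smul_zero, zero_smul, map_zero, hRfop0a, hRfop0b,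 hRfop0c, hRbop0a, hRbop0b, hRbop0c, mul_zero, zero_mul, add_zero, zero_add, sub_zero, zero_sub, neg_zero, gb_n1, gb_n2, gf_n1, gf_n2, T_n1, T_n2, Rb_n1, Rb_n2, Rb_n3, Rb_n4, Rf_n1, Rf_n2, Rf_n3, Rf_n4]
    linear_combination e1 + f * e4 + ((1 : ℝ) * f * (gf X4.2 Y.2)) * (h2 X1.1 X2.1 X3.1 X.1) + ((-1 : ℝ) * f * (gf X3.2 Y.2)) * (h2 X1.1 X2.1 X4.1 X.1) + ((1 : ℝ) * f * (gf X2.2 Y.2)) * (h2 X3.1 X4.1 X1.1 X.1) + ((-1 : ℝ) * f * (gf X1.2 Y.2)) * (h2 X3.1 X4.1 X2.1 X.1) + ((-1 : ℝ) * f * (gf X4.2 X.2)) * (h2 X1.1 X2.1 X3.1 Y.1) + ((1 : ℝ) * f * (gf X3.2 X.2)) * (h2 X1.1 X2.1 X4.1 Y.1) + ((-1 : ℝ) * f * (gf X2.2 X.2)) * (h2 X3.1 X4.1 X1.1 Y.1) + ((1 : ℝ) * f * (gf X1.2 X.2)) * (h2 X3.1 X4.1 X2.1 Y.1) + ((-1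 : ℝ) * f * (gf X2.2 X4.2)) * (h2 X.1 Y.1 X1.1 X3.1) + ((1 : ℝ) * f * (gf X2.2 X3.2)) * (h2 X.1 Y.1 X1.1 X4.1) + ((1 : ℝ) * f * (gf X1.2 X4.2)) * (h2 X.1 Y.1 X2.1 X3.1) + ((-1 : ℝ) * f * (gf X1.2 X3.2)) * (h2 X.1 Y.1 X2.1 X4.1) + ((-1 : ℝ) * f * (gf X2.2 X4.2)) * (h2 X.1 Y.1 X3.1 X1.1) + ((1 : ℝ) * f * (gf X1.2 X4.2)) * (h2 X.1 Y.1 X3.1 X2.1) + ((1 : ℝ) * f * (gf X2.2 X3.2)) * (h2 X.1 Y.1 X4.1 X1.1) + ((-1 : ℝ) * f * (gf X1.2 X3.2)) * (h2 X.1 Y.1 X4.1 X2.1) + ((1 : ℝ) * f) * (h3 X.1 X1.1 Y.2 X3.2 X4.2 X2.2) + ((-1 : ℝ) * f) * (h3 X.1 X2.1 Y.2 X3.2 X4.2 X1.2) + ((1 : ℝ) * f) * (h3 X.1 X3.1 X2.2 X4.2 Y.2 X1.2) + ((-1 : ℝ) * f) * (h3 X.1 X4.1 X2.2 X3.2 Y.2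 X1.2) + ((-1 : ℝ) * f) * (h3 Y.1 X1.1 X.2 X3.2 X4.2 X2.2) + ((1 : ℝ) * f) * (h3 Y.1 X2.1 X.2 X3.2 X4.2 X1.2) + ((-1 : ℝ) * f) * (h3 Y.1 X3.1 X2.2 X4.2 X.2 X1.2) + ((1 : ℝ) * f) * (h3 Y.1 X4.1 X2.2 X3.2 X.2 X1.2) + ((-1)*(f)*(gf X.2 X1.2)) * (hRb12 (Tsh Y.1) X2.1 X3.1 X4.1) + ((f)*(gf Y.2 X1.2)) * (hRb12 (Tsh X.1) X2.1 X3.1 X4.1) + ((-1)*(f)*(gf X2.2 X4.2)) * (hTRbop1 X.1 Y.1 X1.1 X3.1) + ((-1)*(f)*(f)*(gf X1.2 X4.2)*(gf X2.2 X.2) + (f)*(f)*(gf X1.2 X4.2)*(gf X.2 X2.2) + (f)*(f)*(gf X1.2 X.2)*(gf X2.2 X4.2) + (-1)*(f)*(f)*(gf X2.2 X4.2)*(gf X.2 X1.2)) * (hTs (Tsh Y.1) X3.1) + ((f)*(f)*(gf X1.2 X4.2)*(gf X2.2 Y.2) + (-1)*(f)*(f)*(gf X1.2 X4.2)*(gf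 Y.2 X2.2) + (-1)*(f)*(f)*(gf X1.2 Y.2)*(gf X2.2 X4.2) + (f)*(f)*(gf X2.2 X4.2)*(gf Y.2 X1.2)) * (hTs (Tsh X.1) X3.1) + ((T X2.1 X3.1)*(f)*(gf Y.2 X4.2) + (-1)*(T X2.1 X4.1)*(f)*(gf Y.2 X3.2)) * (hTs X.1 X1.1) + ((Δ)*(Δ)*(f)*(f)*(f)*(gf X2.2 X3.2)*(gf Y.2 X4.2) + (-1)*(Δ)*(Δ)*(f)*(f)*(f)*(gf X2.2 X4.2)*(gf Y.2 X3.2) + (Δ)*(T X2.1 X3.1)*(f)*(f)*(gf Y.2 X4.2) + (-1)*(Δ)*(T X2.1 X4.1)*(f)*(f)*(gf Y.2 X3.2) + (Rb X2.1 (Tsh Y.1) X3.1 X4.1)*(f) + (-1)*(T X3.1 (Tsh Y.1))*(f)*(f)*(gf X2.2 X4.2) + (T X4.1 (Tsh Y.1))*(f)*(f)*(gf X2.2 X3.2)) * (hgfs X.2 X1.2) + ((-1)*(T X2.1 X3.1)*(f)*(gf X.2 X4.2) + (T X2.1 X4.1)*(f)*(gf X.2 X3.2)) * (hTs Y.1 X1.1)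 + ((Δ)*(Δ)*(f)*(f)*(f)*(gf X1.2 X4.2)*(gf X2.2 Y.2) + (-1)*(Δ)*(Δ)*(f)*(f)*(f)*(gf X1.2 X4.2)*(gf Y.2 X2.2) + (-1)*(Δ)*(Δ)*(f)*(f)*(f)*(gf X1.2 Y.2)*(gf X2.2 X4.2) + (Δ)*(Δ)*(f)*(f)*(f)*(gf X2.2 X4.2)*(gf Y.2 X1.2) + (Δ)*(T X1.1 X4.1)*(f)*(f)*(gf X2.2 Y.2) + (-1)*(Δ)*(T X1.1 X4.1)*(f)*(f)*(gf Y.2 X2.2) + (-1)*(Δ)*(T X2.1 X4.1)*(f)*(f)*(gf X1.2 Y.2) + (Δ)*(T X2.1 X4.1)*(f)*(f)*(gf Y.2 X1.2) + (Rb X1.1 X2.1 X4.1 (Tsh Y.1))*(f) + (T X1.1 Y.1)*(T X2.1 X4.1)*(f) + (-1)*(T X1.1 X4.1)*(T X2.1 Y.1)*(f)) * (hgfs X.2 X3.2) + ((-1)*(Δ)*(f)*(f)*(gf X2.2 X4.2) + (-1)*(T X2.1 X4.1)*(f)) * (hRfop X.2 Y.2 X1.2 X3.2) + ((f)*(gf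 X2.2 X3.2)) * (hTRbop1 X.1 Y.1 X1.1 X4.1) + ((f)*(f)*(gf X1.2 X3.2)*(gf X2.2 X.2) + (-1)*(f)*(f)*(gf X1.2 X3.2)*(gf X.2 X2.2) + (-1)*(f)*(f)*(gf X1.2 X.2)*(gf X2.2 X3.2) + (f)*(f)*(gf X2.2 X3.2)*(gf X.2 X1.2)) * (hTs (Tsh Y.1) X4.1) + ((-1)*(f)*(f)*(gf X1.2 X3.2)*(gf X2.2 Y.2) + (f)*(f)*(gf X1.2 X3.2)*(gf Y.2 X2.2) + (f)*(f)*(gf X1.2 Y.2)*(gf X2.2 X3.2) + (-1)*(f)*(f)*(gf X2.2 X3.2)*(gf Y.2 X1.2)) * (hTs (Tsh X.1) X4.1) + ((-1)*(Δ)*(Δ)*(f)*(f)*(f)*(gf X1.2 X3.2)*(gf X2.2 Y.2) + (Δ)*(Δ)*(f)*(f)*(f)*(gf X1.2 X3.2)*(gf Y.2 X2.2) + (Δ)*(Δ)*(f)*(f)*(f)*(gf X1.2 Y.2)*(gf X2.2 X3.2) + (-1)*(Δ)*(Δ)*(f)*(f)*(f)*(gf X2.2 X3.2)*(gf Y.2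 X1.2) + (-1)*(Δ)*(T X1.1 X3.1)*(f)*(f)*(gf X2.2 Y.2) + (Δ)*(T X1.1 X3.1)*(f)*(f)*(gf Y.2 X2.2) + (Δ)*(T X2.1 X3.1)*(f)*(f)*(gf X1.2 Y.2) + (-1)*(Δ)*(T X2.1 X3.1)*(f)*(f)*(gf Y.2 X1.2) + (-1)*(Rb X1.1 X2.1 X3.1 (Tsh Y.1))*(f) + (-1)*(T X1.1 Y.1)*(T X2.1 X3.1)*(f) + (T X1.1 X3.1)*(T X2.1 Y.1)*(f)) * (hgfs X.2 X4.2) + ((Δ)*(f)*(f)*(gf X2.2 X3.2) + (T X2.1 X3.1)*(f)) * (hRfop X.2 Y.2 X1.2 X4.2) + ((-1)*(T X.1 X1.1)*(f)) * (hRf12 Y.2 X2.2 X3.2 X4.2) + ((T Y.1 X1.1)*(f)) * (hRf12 X.2 X2.2 X3.2 X4.2) + ((-1)*(Δ)*(Δ)*(f)*(f)*(f)*(gf X1.2 X3.2)*(gf Y.2 X4.2) + (Δ)*(Δ)*(f)*(f)*(f)*(gf X1.2 X4.2)*(gf Y.2 X3.2) + (-1)*(Δ)*(T X1.1 X3.1)*(f)*(f)*(gf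 Y.2 X4.2) + (Δ)*(T X1.1 X4.1)*(f)*(f)*(gf Y.2 X3.2) + (-1)*(Rb X1.1 (Tsh Y.1) X3.1 X4.1)*(f) + (T X3.1 (Tsh Y.1))*(f)*(f)*(gf X1.2 X4.2) + (-1)*(T X4.1 (Tsh Y.1))*(f)*(f)*(gf X1.2 X3.2)) * (hgfs X.2 X2.2) + ((Δ)*(Δ)*(f)*(f)*(f)*(gf X1.2 X3.2)*(gf X4.2 X.2) + (-1)*(Δ)*(Δ)*(f)*(f)*(f)*(gf X1.2 X4.2)*(gf X3.2 X.2) + (Δ)*(T X1.1 X3.1)*(f)*(f)*(gf X4.2 X.2) + (-1)*(Δ)*(T X1.1 X4.1)*(f)*(f)*(gf X3.2 X.2) + (Rb X1.1 (Tsh X.1) X3.1 X4.1)*(f) + (-1)*(T X3.1 (Tsh X.1))*(f)*(f)*(gf X1.2 X4.2) + (T X4.1 (Tsh X.1))*(f)*(f)*(gf X1.2 X3.2)) * (hgfs Y.2 X2.2) + ((-1)*(T X1.1 X3.1)*(f)*(gf Y.2 X4.2) + (T X1.1 X4.1)*(f)*(gf Y.2 X3.2)) * (hTs X.1 X2.1)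 + ((T X1.1 X3.1)*(f)*(gf X.2 X4.2) + (-1)*(T X1.1 X4.1)*(f)*(gf X.2 X3.2)) * (hTs Y.1 X2.1) + ((-1)*(Δ)*(f)*(f)*(gf X1.2 X3.2) + (-1)*(T X1.1 X3.1)*(f)) * (hRfop X.2 Y.2 X2.2 X4.2) + ((-1)*(f)*(gf X1.2 X3.2)) * (hTRbop1 X.1 Y.1 X2.1 X4.1) + ((Δ)*(f)*(f)*(gf X1.2 X4.2) + (T X1.1 X4.1)*(f)) * (hRfop X.2 Y.2 X2.2 X3.2) + ((f)*(gf X1.2 X4.2)) * (hTRbop1 X.1 Y.1 X2.1 X3.1) + ((-1)*(f)*(gf X.2 X3.2)) * (hRb34 X1.1 X2.1 (Tsh Y.1) X4.1) + ((f)*(gf Y.2 X3.2)) * (hRb34 X1.1 X2.1 (Tsh X.1) X4.1) + ((-1)*(f)*(gf X2.2 X4.2)) * (hTRbop2 X.1 Y.1 X3.1 X1.1) + ((-1)*(Rb X1.1 X2.1 X4.1 (Tsh X.1))*(f) + (-1)*(T X1.1 X.1)*(T X2.1 X4.1)*(f) + (T X1.1 X4.1)*(T X2.1 X.1)*(f))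 * (hgfs Y.2 X3.2) + ((T X1.1 X4.1)*(f)*(gf X2.2 Y.2) + (-1)*(T X2.1 X4.1)*(f)*(gf X1.2 Y.2)) * (hTs X.1 X3.1) + ((-1)*(T X1.1 X4.1)*(f)*(gf X2.2 X.2) + (T X2.1 X4.1)*(f)*(gf X1.2 X.2)) * (hTs Y.1 X3.1) + ((-1)*(Δ)*(f)*(f)*(gf X2.2 X4.2) + (-1)*(T X2.1 X4.1)*(f)) * (hRfop2 X.2 Y.2 X3.2 X1.2) + ((Δ)*(f)*(f)*(gf X1.2 X4.2) + (T X1.1 X4.1)*(f)) * (hRfop2 X.2 Y.2 X3.2 X2.2) + ((f)*(gf X1.2 X4.2)) * (hTRbop2 X.1 Y.1 X3.1 X2.1) + ((-1)*(T X.1 X3.1)*(f)) * (hRf34 X1.2 X2.2 Y.2 X4.2) + ((T Y.1 X3.1)*(f)) * (hRf34 X1.2 X2.2 X.2 X4.2) + ((Rb X1.1 X2.1 X3.1 (Tsh X.1))*(f) + (T X1.1 X.1)*(T X2.1 X3.1)*(f) + (-1)*(T X1.1 X3.1)*(T X2.1 X.1)*(f)) * (hgfs Y.2 X4.2) + ((-1)*(T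 X1.1 X3.1)*(f)*(gf X2.2 Y.2) + (T X2.1 X3.1)*(f)*(gf X1.2 Y.2)) * (hTs X.1 X4.1) + ((T X1.1 X3.1)*(f)*(gf X2.2 X.2) + (-1)*(T X2.1 X3.1)*(f)*(gf X1.2 X.2)) * (hTs Y.1 X4.1) + ((-1)*(Δ)*(f)*(f)*(gf X1.2 X3.2) + (-1)*(T X1.1 X3.1)*(f)) * (hRfop2 X.2 Y.2 X4.2 X2.2) + ((-1)*(f)*(gf X1.2 X3.2)) * (hTRbop2 X.1 Y.1 X4.1 X2.1) + ((f)*(gf X2.2 X3.2)) * (hTRbop2 X.1 Y.1 X4.1 X1.1) + ((Δ)*(f)*(f)*(gf X2.2 X3.2) + (T X2.1 X3.1)*(f)) * (hRfop2 X.2 Y.2 X4.2 X1.2) + ((-1)*(T X3.1 X.1)*(f)*(gf X2.2 Y.2) + (T X3.1 Y.1)*(f)*(gf X2.2 X.2)) * (hTs X4.1 X1.1) + ((T X4.1 X.1)*(f)*(gf X2.2 Y.2) + (-1)*(T X4.1 Y.1)*(f)*(gf X2.2 X.2)) * (hTs X3.1 X1.1) + ((-1)*(f)*(gf X2.2 Y.2))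 * (hRbpr X3.1 X4.1 X1.1 (Tsh X.1)) + ((T X3.1 X.1)*(f)*(gf X1.2 Y.2) + (-1)*(T X3.1 Y.1)*(f)*(gf X1.2 X.2)) * (hTs X4.1 X2.1) + ((-1)*(T X4.1 X.1)*(f)*(gf X1.2 Y.2) + (T X4.1 Y.1)*(f)*(gf X1.2 X.2)) * (hTs X3.1 X2.1) + ((f)*(gf X1.2 Y.2)) * (hRbpr X3.1 X4.1 X2.1 (Tsh X.1)) + ((f)*(gf X2.2 X.2)) * (hRbpr X3.1 X4.1 X1.1 (Tsh Y.1)) + ((-1)*(f)*(gf X1.2 X.2)) * (hRbpr X3.1 X4.1 X2.1 (Tsh Y.1)) + ((f)*(f)*(gf X2.2 X3.2)*(gf Y.2 X4.2) + (-1)*(f)*(f)*(gf X2.2 X4.2)*(gf Y.2 X3.2)) * (hTs (Tsh X.1) X1.1) + ((-1)*(f)*(f)*(gf X1.2 X3.2)*(gf Y.2 X4.2) + (f)*(f)*(gf X1.2 X4.2)*(gf Y.2 X3.2)) * (hTs (Tsh X.1) X2.1) + ((-1)*(f)*(f)*(gf X2.2 X3.2)*(gf X.2 X4.2) + (f)*(f)*(gf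 X2.2 X4.2)*(gf X.2 X3.2)) * (hTs (Tsh Y.1) X1.1) + ((f)*(f)*(gf X1.2 X3.2)*(gf X.2 X4.2) + (-1)*(f)*(f)*(gf X1.2 X4.2)*(gf X.2 X3.2)) * (hTs (Tsh Y.1) X2.1) + ((-1)*(Δ)*(Δ)*(f)*(f)*(f)*(gf X2.2 X3.2)*(gf X4.2 X.2) + (Δ)*(Δ)*(f)*(f)*(f)*(gf X2.2 X4.2)*(gf X3.2 X.2) + (-1)*(Δ)*(T X2.1 X3.1)*(f)*(f)*(gf X4.2 X.2) + (Δ)*(T X2.1 X4.1)*(f)*(f)*(gf X3.2 X.2) + (-1)*(Rb X2.1 (Tsh X.1) X3.1 X4.1)*(f) + (T X3.1 (Tsh X.1))*(f)*(f)*(gf X2.2 X4.2) + (-1)*(T X4.1 (Tsh X.1))*(f)*(f)*(gf X2.2 X3.2)) * (hgfs Y.2 X1.2) + ((-1)*(Δ)*(f)*(f)*(gf X2.2 X4.2) + (-1)*(T X2.1 X4.1)*(f)) * (hRf34 X.2 Y.2 X3.2 X1.2) + ((Δ)*(f)*(f)*(gf X1.2 X4.2) + (T X1.1 X4.1)*(f))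 * (hRf34 X.2 Y.2 X3.2 X2.2) + ((-1)*(Δ)*(f)*(f)*(gf X1.2 X3.2) + (-1)*(T X1.1 X3.1)*(f)) * (hRf34 X.2 Y.2 X4.2 X2.2) + ((Δ)*(f)*(f)*(gf X2.2 X3.2) + (T X2.1 X3.1)*(f)) * (hRf34 X.2 Y.2 X4.2 X1.2)
end

section
/- With the pointwise warped-product curvature data of the setup: if R·R = 0 on V (operations taken with respect to g), then (i) R̄·R̄ = 0 (the base data is semisymmetric); (ii) R̃·R̃ = fΔ Q(g̃,R̃) (the fiber data is pseudosymmetric); (iii) if T ≠ 0 then there is a real number c with R̃ = c G̃ (the fiber data is of constant curvature); and (iv) R̄·T = 0. -/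
/-- If `D` is skew with respect to a symmetric form `h`, then `D` annihilates `Gten h`. -/
theorem wps_skewGten {V : Type} (h : V → V → ℝ) (hsymm : ∀ x y, h x y = h y x)
    (D : V → V) (hsk : ∀ a b, h (D a) b + h (D b) a = 0) (x y z w : V) :
    WPS.Gten h (D x) y z w + WPS.Gten h x (D y) z w + WPS.Gten h x y (D z) w
      + WPS.Gten h x y z (D w) = 0 := by
  simp only [WPS.Gten]
  rw [hsymm x (D z), hsymm x (D w), hsymm y (D z), hsymm y (D w)]
  linear_combination h y z * hsk x w + h x w * hsk y z - h y w * hsk x z - h x z * hsk y w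

theorem stmt8
    {Vb Vf : Type} [AddCommGroup Vb] [Module ℝ Vb] [FiniteDimensional ℝ Vb]
    [AddCommGroup Vf] [Module ℝ Vf] [FiniteDimensional ℝ Vf]
    (p q : ℕ) (hp : 1 ≤ p) (hq : 1 ≤ q) (hn : 3 ≤ p + q)
    (hdb : Module.finrank ℝ Vb = p) (hdf : Module.finrank ℝ Vf = q)
    (gb : Vb → Vb → ℝ) (hgb : WPS.SymBilin gb) (hgbn : WPS.Nondeg gb)
    (gf : Vf → Vf → ℝ) (hgf : WPS.SymBilin gf) (hgfn : WPS.Nondeg gf)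
    (f Δ : ℝ) (hf : 0 < f)
    (T : Vb → Vb → ℝ) (hT : WPS.SymBilin T)
    (Tsh : Vb →ₗ[ℝ] Vb) (hTsh : ∀ x y, gb (Tsh x) y = T x y)
    (Ω : ℝ) (hΩ : Ω = -f * (((q : ℝ) - 1) * Δ + LinearMap.trace ℝ Vb Tsh))
    (Rb : Vb → Vb → Vb → Vb → ℝ) (hRb : WPS.Curv Rb)
    (Rf : Vf → Vf → Vf → Vf → ℝ) (hRf : WPS.Curv Rf)
    (Rbop : Vb → Vb → Vb → Vb) (hRbop : ∀ x y z w, gb (Rbop x y z) w = Rb x y z w)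
    (Rfop : Vf → Vf → Vf → Vf) (hRfop : ∀ x y z w, gf (Rfop x y z) w = Rf x y z w)
    (Sb : Vb → Vb → ℝ)
    (hSb : ∀ y z, ∃ E : Vb →ₗ[ℝ] Vb, (∀ x w, gb (E x) w = Rb x y z w) ∧
      Sb y z = LinearMap.trace ℝ Vb E)
    (Sf : Vf → Vf → ℝ)
    (hSf : ∀ y z, ∃ E : Vf →ₗ[ℝ] Vf, (∀ x w, gf (E x) w = Rf x y z w) ∧
      Sf y z = LinearMap.trace ℝ Vf E)
    (κf : ℝ)
    (hκf : ∃ E : Vf →ₗ[ℝ] Vf, (∀ x y, gf (E x) y = Sf x y) ∧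
      κf = LinearMap.trace ℝ Vf E)
    (gV : Vb × Vf → Vb × Vf → ℝ)
    (hgV : ∀ X Y, gV X Y = gb X.1 Y.1 + f * gf X.2 Y.2)
    (RV : Vb × Vf → Vb × Vf → Vb × Vf → Vb × Vf → ℝ)
    (hRV : ∀ X Y Z W, RV X Y Z W = Rb X.1 Y.1 Z.1 W.1
      + f * (T X.1 Z.1 * gf Y.2 W.2 + T Y.1 W.1 * gf X.2 Z.2
        - T X.1 W.1 * gf Y.2 Z.2 - T Y.1 Z.1 * gf X.2 W.2)
      + f * Rf X.2 Y.2 Z.2 W.2 - f ^ 2 * Δ * WPS.Gten gf X.2 Y.2 Z.2 W.2)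
    (SV : Vb × Vf → Vb × Vf → ℝ)
    (hSV : ∀ X Y, SV X Y = (Sb X.1 Y.1 - (q : ℝ) * T X.1 Y.1)
      + (Sf X.2 Y.2 + Ω * gf X.2 Y.2))
    (Rop : Vb × Vf → Vb × Vf → Vb × Vf → Vb × Vf)
    (hRop : ∀ X Y Z W, gV (Rop X Y Z) W = RV X Y Z W)
    (hmain : (∀ X1 X2 X3 X4 X Y : Vb × Vf, WPS.dot4 Rop RV X1 X2 X3 X4 X Y
      = 0)) :
    (∀ x y z w u v : Vb, WPS.dot4 Rbop Rb x y z w u v = 0)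
    ∧ (∀ a b c d u v : Vf, WPS.dot4 Rfop Rf a b c d u v
        = f * Δ * WPS.Q4 gf Rf a b c d u v)
    ∧ ((¬ ∀ x y : Vb, T x y = 0) →
        ∃ c : ℝ, ∀ a b e d : Vf, Rf a b e d = c * WPS.Gten gf a b e d)
    ∧ (∀ x y u v : Vb, WPS.dot2 Rbop T x y u v = 0) := by
  obtain ⟨gbs, gbl⟩ := hgb
  obtain ⟨gfs, gfl⟩ := hgf
  obtain ⟨Ts, Tl⟩ := hT
  obtain ⟨Rb1, Rb2, Rb3, Rb4, RbA1, RbA2, RbP, RbB⟩ := hRb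
  obtain ⟨Rf1, Rf2, Rf3, Rf4, RfA1, RfA2, RfP, RfB⟩ := hRf
  have hf' : f ≠ 0 := ne_of_gt hf
  -- basic pointwise lemmas
  have gb0l : ∀ y, gb 0 y = 0 := fun y => (gbl y).map_zero
  have gb0r : ∀ x, gb x 0 = 0 := fun x => by rw [gbs]; exact gb0l x
  have gbsub : ∀ x y z, gb (x - y) z = gb x z - gb y z := fun x y z => (gbl z).map_sub x y
  have gbsml : ∀ (c : ℝ) x y, gb (c • x) y = c * gb x y := fun c x y => by
    simpa using (gbl y).map_smul c x
  have gbnegl : ∀ x y, gb (-x) y = -gb x y := fun x y => (gbl y).map_neg x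
  have gf0l : ∀ y, gf 0 y = 0 := fun y => (gfl y).map_zero
  have gf0r : ∀ x, gf x 0 = 0 := fun x => by rw [gfs]; exact gf0l x
  have gfsub : ∀ x y z, gf (x - y) z = gf x z - gf y z := fun x y z => (gfl z).map_sub x y
  have gfsml : ∀ (c : ℝ) x y, gf (c • x) y = c * gf x y := fun c x y => by
    simpa using (gfl y).map_smul c x
  have gfsmr : ∀ (c : ℝ) x y, gf x (c • y) = c * gf x y := fun c x y => by
    rw [gfs, gfsml, gfs]
  have T0l : ∀ y, T 0 y = 0 := fun y => (Tl y).map_zero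
  have T0r : ∀ x, T x 0 = 0 := fun x => by rw [Ts]; exact T0l x
  have Tsml : ∀ (c : ℝ) x y, T (c • x) y = c * T x y := fun c x y => by
    simpa using (Tl y).map_smul c x
  have Tsmr : ∀ (c : ℝ) x y, T x (c • y) = c * T x y := fun c x y => by
    rw [Ts, Tsml, Ts]
  have Tnegl : ∀ x y, T (-x) y = -T x y := fun x y => (Tl y).map_neg x
  have Tnegr : ∀ x y, T x (-y) = -T x y := fun x y => by rw [Ts, Tnegl, Ts]
  have Rb01 : ∀ y z w, Rb 0 y z w = 0 := fun y z w => (Rb1 y z w).map_zero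
  have Rb02 : ∀ x z w, Rb x 0 z w = 0 := fun x z w => (Rb2 x z w).map_zero
  have Rb03 : ∀ x y w, Rb x y 0 w = 0 := fun x y w => (Rb3 x y w).map_zero
  have Rb04 : ∀ x y z, Rb x y z 0 = 0 := fun x y z => (Rb4 x y z).map_zero
  have Rf01 : ∀ y z w, Rf 0 y z w = 0 := fun y z w => (Rf1 y z w).map_zero
  have Rf02 : ∀ x z w, Rf x 0 z w = 0 := fun x z w => (Rf2 x z w).map_zero
  have Rf03 : ∀ x y w, Rf x y 0 w = 0 := fun x y w => (Rf3 x y w).map_zero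
  have Rf04 : ∀ x y z, Rf x y z 0 = 0 := fun x y z => (Rf4 x y z).map_zero
  have Rfsm1 : ∀ (c : ℝ) x y z w, Rf (c • x) y z w = c * Rf x y z w := fun c x y z w => by
    simpa using (Rf1 y z w).map_smul c x
  have Rfsub1 : ∀ x x' y z w, Rf (x - x') y z w = Rf x y z w - Rf x' y z w :=
    fun x x' y z w => (Rf1 y z w).map_sub x x'
  have Rfsm2 : ∀ (c : ℝ) x y z w, Rf x (c • y) z w = c * Rf x y z w := fun c x y z w => by
    simpa using (Rf2 x z w).map_smul c y
  have Rfsub2 : ∀ x y y' z w, Rf x (y - y') z w = Rf x y z w - Rf x y' z w :=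
    fun x y y' z w => (Rf2 x z w).map_sub y y'
  have Rfsm3 : ∀ (c : ℝ) x y z w, Rf x y (c • z) w = c * Rf x y z w := fun c x y z w => by
    simpa using (Rf3 x y w).map_smul c z
  have Rfsub3 : ∀ x y z z' w, Rf x y (z - z') w = Rf x y z w - Rf x y z' w :=
    fun x y z z' w => (Rf3 x y w).map_sub z z'
  have Rfsm4 : ∀ (c : ℝ) x y z w, Rf x y z (c • w) = c * Rf x y z w := fun c x y z w => by
    simpa using (Rf4 x y z).map_smul c w
  have Rfsub4 : ∀ x y z w w', Rf x y z (w - w') = Rf x y z w - Rf x y z w' :=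
    fun x y z w w' => (Rf4 x y z).map_sub w w'
  -- uniqueness from nondegeneracy
  have gbuniq : ∀ A B : Vb, (∀ w, gb A w = gb B w) → A = B := by
    intro A B hAB
    have h0 : ∀ w, gb (A - B) w = 0 := fun w => by rw [gbsub, hAB w, sub_self]
    exact sub_eq_zero.mp (hgbn _ h0)
  have gfuniq : ∀ A B : Vf, (∀ w, gf A w = gf B w) → A = B := by
    intro A B hAB
    have h0 : ∀ w, gf (A - B) w = 0 := fun w => by rw [gfsub, hAB w, sub_self]
    exact sub_eq_zero.mp (hgfn _ h0)
  -- component formulas for Rop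
  have ropc1 : ∀ X Y Z w, gb (Rop X Y Z).1 w = RV X Y Z (w, 0) := by
    intro X Y Z w
    have h := hRop X Y Z (w, 0)
    rw [hgV] at h
    simpa [gf0r] using h
  have ropc2 : ∀ X Y Z w2, f * gf (Rop X Y Z).2 w2 = RV X Y Z (0, w2) := by
    intro X Y Z w2
    have h := hRop X Y Z (0, w2)
    rw [hgV] at h
    simpa [gb0r] using h
  -- Rop on (base, base) pairs
  have ropBB : ∀ u v z (c : Vf), Rop (u, (0:Vf)) (v, 0) (z, c) = (Rbop u v z, (0:Vf)) := by
    intro u v z c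
    have h1 : (Rop (u, (0:Vf)) (v, 0) (z, c)).1 = Rbop u v z := by
      apply gbuniq
      intro w
      rw [ropc1, hRV, hRbop]
      simp [WPS.Gten, gf0l, gf0r, Rf01]
    have h2 : (Rop (u, (0:Vf)) (v, 0) (z, c)).2 = 0 := by
      apply gfuniq
      intro w2
      have h := ropc2 (u, (0:Vf)) (v, 0) (z, c) w2
      rw [hRV] at h
      simp only [WPS.Gten, gf0l, gf0r, T0l, T0r, Rb04, Rf01, Rf02, mul_zero, zero_mul,
        add_zero, zero_add, sub_zero, zero_sub, neg_zero, sub_self] at h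
      rw [gf0l]
      exact (mul_eq_zero.mp h).resolve_left hf'
    exact Prod.ext h1 h2
  have rbop0 : ∀ u v, Rbop u v 0 = 0 := by
    intro u v
    apply gbuniq
    intro w
    rw [hRbop, Rb03, gb0l]
  -- Rop on (fiber, fiber) pairs
  have ropFF : ∀ u v (c : Vf), Rop ((0:Vb), u) (0, v) (0, c)
      = ((0:Vb), Rfop u v c - (f * Δ) • WPS.wedge gf u v c) := by
    intro u v c
    have h1 : (Rop ((0:Vb), u) (0, v) (0, c)).1 = 0 := by
      apply gbuniq
      intro w
      rw [ropc1, hRV]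
      simp [WPS.Gten, gf0l, gf0r, T0l, T0r, Rb01, Rf04, gb0l]
    have h2 : (Rop ((0:Vb), u) (0, v) (0, c)).2
        = Rfop u v c - (f * Δ) • WPS.wedge gf u v c := by
      apply gfuniq
      intro w2
      have h := ropc2 ((0:Vb), u) (0, v) (0, c) w2
      rw [hRV] at h
      simp only [WPS.Gten] at h
      simp only [WPS.Gten, T0l, T0r, Rb01, mul_zero, zero_mul, add_zero, zero_add,
        sub_zero, zero_sub, neg_zero] at h
      have h' : gf (Rop ((0:Vb), u) (0, v) (0, c)).2 w2
          = Rf u v c w2 - f * Δ * (gf u w2 * gf v c - gf u c * gf v w2) := by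
        refine mul_left_cancel₀ hf' ?_
        rw [h]; ring
      rw [h', gfsub, gfsml, hRfop, WPS.wedge, gfsub, gfsml, gfsml]
      ring
    exact Prod.ext h1 h2
  -- Rop on (base, fiber) pairs
  have ropBF : ∀ u (v : Vf) z (c : Vf), Rop (u, (0:Vf)) ((0:Vb), v) (z, c)
      = (-((f * gf v c) • Tsh u), T u z • v) := by
    intro u v z c
    have h1 : (Rop (u, (0:Vf)) ((0:Vb), v) (z, c)).1 = -((f * gf v c) • Tsh u) := by
      apply gbuniq
      intro w
      rw [ropc1, hRV, gbnegl, gbsml, hTsh]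
      simp [WPS.Gten, gf0l, gf0r, T0l, T0r, Rb02, Rf01]
      ring
    have h2 : (Rop (u, (0:Vf)) ((0:Vb), v) (z, c)).2 = T u z • v := by
      apply gfuniq
      intro w2
      have h := ropc2 (u, (0:Vf)) ((0:Vb), v) (z, c) w2
      rw [hRV] at h
      simp only [WPS.Gten] at h
      simp only [WPS.Gten, gf0l, gf0r, T0l, T0r, Rb02, Rb04, Rf01, mul_zero, zero_mul,
        add_zero, zero_add, sub_zero, zero_sub, neg_zero, sub_self] at h
      rw [gfsml]
      refine mul_left_cancel₀ hf' ?_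
      linear_combination h
    exact Prod.ext h1 h2
  refine ⟨?_, ?_, ?_, ?_⟩
  · -- (i) base semisymmetry
    intro x y z w u v
    have h := hmain (x, 0) (y, 0) (z, 0) (w, 0) (u, 0) (v, 0)
    rw [WPS.dot4] at h ⊢
    rw [ropBB u v x 0, ropBB u v y 0, ropBB u v z 0, ropBB u v w 0] at h
    simp only [hRV] at h
    simp [WPS.Gten, gf0l, gf0r, Rf01] at h
    linarith [h]
  · -- (ii) fiber pseudosymmetry
    intro a b c d u v
    have hsk : ∀ s t : Vf, gf (Rfop u v s - (f * Δ) • WPS.wedge gf u v s) t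
        + gf (Rfop u v t - (f * Δ) • WPS.wedge gf u v t) s = 0 := by
      intro s t
      rw [gfsub, gfsub, gfsml, gfsml, hRfop, hRfop]
      simp only [WPS.wedge, gfsub, gfsml]
      linear_combination RfA2 u v s t
    have hGsum : WPS.Gten gf (Rfop u v a - (f * Δ) • WPS.wedge gf u v a) b c d
        + WPS.Gten gf a (Rfop u v b - (f * Δ) • WPS.wedge gf u v b) c d
        + WPS.Gten gf a b (Rfop u v c - (f * Δ) • WPS.wedge gf u v c) d
        + WPS.Gten gf a b c (Rfop u v d - (f * Δ) • WPS.wedge gf u v d) = 0 :=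
      wps_skewGten gf gfs (fun s => Rfop u v s - (f * Δ) • WPS.wedge gf u v s) hsk a b c d
    have e1 := Rfsub1 (Rfop u v a) ((f * Δ) • WPS.wedge gf u v a) b c d
    have e2 := Rfsub2 a (Rfop u v b) ((f * Δ) • WPS.wedge gf u v b) c d
    have e3 := Rfsub3 a b (Rfop u v c) ((f * Δ) • WPS.wedge gf u v c) d
    have e4 := Rfsub4 a b c (Rfop u v d) ((f * Δ) • WPS.wedge gf u v d)
    rw [Rfsm1] at e1
    rw [Rfsm2] at e2
    rw [Rfsm3] at e3
    rw [Rfsm4] at e4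
    have h := hmain (0, a) (0, b) (0, c) (0, d) (0, u) (0, v)
    rw [WPS.dot4] at h
    rw [ropFF u v a, ropFF u v b, ropFF u v c, ropFF u v d] at h
    simp only [hRV] at h
    simp only [T0l, T0r, Rb01, Rb02, Rb03, Rb04, zero_mul, mul_zero, add_zero, zero_add,
      sub_zero, zero_sub, neg_zero] at h
    rw [WPS.dot4, WPS.Q4, WPS.dot4]
    refine mul_left_cancel₀ hf' ?_
    linear_combination h + f * e1 + f * e2 + f * e3 + f * e4 - f ^ 2 * Δ * hGsum
  · -- (iii) fiber of constant curvature
    intro hTne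
    push_neg at hTne
    obtain ⟨u, x, hux⟩ := hTne
    refine ⟨(f * Δ * T u x - f * T x (Tsh u)) / (T u x), ?_⟩
    intro a b e d
    have h := hmain (x, 0) (0, b) (0, e) (0, d) (u, 0) (0, a)
    rw [WPS.dot4] at h
    rw [ropBF u a x 0, ropBF u a 0 b, ropBF u a 0 e, ropBF u a 0 d] at h
    simp only [hRV] at h
    simp only [WPS.Gten] at h
    simp only [gf0l, gf0r, T0l, T0r, Rb01, Rb02, Rb03, Rb04, Rf01, Rf02, Rf03, Rf04,
      Rfsm1, gfsml, gfsmr, Tsml, Tsmr, Tnegl, Tnegr, gbnegl, gbsml,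
      mul_zero, zero_mul, add_zero, zero_add, sub_zero, zero_sub, neg_zero, neg_neg,
      zero_smul, smul_zero, neg_smul] at h
    have key : T u x * Rf a b e d
        = (f * Δ * T u x - f * T x (Tsh u)) * (gf a d * gf b e - gf a e * gf b d) := by
      refine mul_left_cancel₀ hf' ?_
      linear_combination -h
    rw [WPS.Gten]
    field_simp
    linear_combination key
  · -- (iv) R̄ · T = 0
    intro x y u v
    have hnontriv : Nontrivial Vf := by
      have h0 : 0 < Module.finrank ℝ Vf := by rw [hdf]; omega
      exact Module.nontrivial_of_finrank_pos h0
    obtain ⟨a, ha⟩ := exists_ne (0 : Vf)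
    have hb : ∃ b, gf a b ≠ 0 := by
      by_contra hc
      push_neg at hc
      exact ha (hgfn a hc)
    obtain ⟨b, hab⟩ := hb
    have h := hmain (x, 0) (0, a) (y, 0) (0, b) (u, 0) (v, 0)
    rw [WPS.dot4] at h
    rw [ropBB u v x 0, ropBB u v y 0] at h
    rw [show (Rop (u, (0:Vf)) (v, 0) ((0:Vb), a)) = (Rbop u v 0, (0:Vf)) from ropBB u v 0 a,
      show (Rop (u, (0:Vf)) (v, 0) ((0:Vb), b)) = (Rbop u v 0, (0:Vf)) from ropBB u v 0 b,
      rbop0] at h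
    simp only [hRV] at h
    simp only [WPS.Gten] at h
    simp only [gf0l, gf0r, T0l, T0r, Rb01, Rb02, Rb03, Rb04, Rf01, Rf02, Rf03, Rf04,
      mul_zero, zero_mul, add_zero, zero_add, sub_zero, zero_sub, neg_zero] at h
    have key : (T (Rbop u v x) y + T x (Rbop u v y)) * (f * gf a b) = 0 := by
      linear_combination -h
    rcases mul_eq_zero.mp key with hk | hk
    · rw [WPS.dot2]; linarith
    · exact absurd hk (mul_ne_zero hf' hab)
end

section
/- With the pointwise warped-product curvature data of the setup, and a real L: if R·R = L Q(g,R) on V (operations taken with respect to g), then (i) R̄·R̄ = L Q(ḡ,R̄) and R̃·R̃ = f(Δ + L) Q(g̃,R̃) (both base and fiber data are pseudosymmetric), and (ii) R̄·T = L Q(ḡ,T). -/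
theorem stmt10
    {Vb Vf : Type} [AddCommGroup Vb] [Module ℝ Vb] [FiniteDimensional ℝ Vb]
    [AddCommGroup Vf] [Module ℝ Vf] [FiniteDimensional ℝ Vf]
    (p q : ℕ) (hp : 1 ≤ p) (hq : 1 ≤ q) (hn : 3 ≤ p + q)
    (hdb : Module.finrank ℝ Vb = p) (hdf : Module.finrank ℝ Vf = q)
    (gb : Vb → Vb → ℝ) (hgb : WPS.SymBilin gb) (hgbn : WPS.Nondeg gb)
    (gf : Vf → Vf → ℝ) (hgf : WPS.SymBilin gf) (hgfn : WPS.Nondeg gf)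
    (f Δ : ℝ) (hf : 0 < f)
    (T : Vb → Vb → ℝ) (hT : WPS.SymBilin T)
    (Tsh : Vb →ₗ[ℝ] Vb) (hTsh : ∀ x y, gb (Tsh x) y = T x y)
    (Ω : ℝ) (hΩ : Ω = -f * (((q : ℝ) - 1) * Δ + LinearMap.trace ℝ Vb Tsh))
    (Rb : Vb → Vb → Vb → Vb → ℝ) (hRb : WPS.Curv Rb)
    (Rf : Vf → Vf → Vf → Vf → ℝ) (hRf : WPS.Curv Rf)
    (Rbop : Vb → Vb → Vb → Vb) (hRbop : ∀ x y z w, gb (Rbop x y z) w = Rb x y z w)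
    (Rfop : Vf → Vf → Vf → Vf) (hRfop : ∀ x y z w, gf (Rfop x y z) w = Rf x y z w)
    (Sb : Vb → Vb → ℝ)
    (hSb : ∀ y z, ∃ E : Vb →ₗ[ℝ] Vb, (∀ x w, gb (E x) w = Rb x y z w) ∧
      Sb y z = LinearMap.trace ℝ Vb E)
    (Sf : Vf → Vf → ℝ)
    (hSf : ∀ y z, ∃ E : Vf →ₗ[ℝ] Vf, (∀ x w, gf (E x) w = Rf x y z w) ∧
      Sf y z = LinearMap.trace ℝ Vf E)
    (κf : ℝ)
    (hκf : ∃ E : Vf →ₗ[ℝ] Vf, (∀ x y, gf (E x) y = Sf x y) ∧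
      κf = LinearMap.trace ℝ Vf E)
    (gV : Vb × Vf → Vb × Vf → ℝ)
    (hgV : ∀ X Y, gV X Y = gb X.1 Y.1 + f * gf X.2 Y.2)
    (RV : Vb × Vf → Vb × Vf → Vb × Vf → Vb × Vf → ℝ)
    (hRV : ∀ X Y Z W, RV X Y Z W = Rb X.1 Y.1 Z.1 W.1
      + f * (T X.1 Z.1 * gf Y.2 W.2 + T Y.1 W.1 * gf X.2 Z.2
        - T X.1 W.1 * gf Y.2 Z.2 - T Y.1 Z.1 * gf X.2 W.2)
      + f * Rf X.2 Y.2 Z.2 W.2 - f ^ 2 * Δ * WPS.Gten gf X.2 Y.2 Z.2 W.2)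
    (SV : Vb × Vf → Vb × Vf → ℝ)
    (hSV : ∀ X Y, SV X Y = (Sb X.1 Y.1 - (q : ℝ) * T X.1 Y.1)
      + (Sf X.2 Y.2 + Ω * gf X.2 Y.2))
    (Rop : Vb × Vf → Vb × Vf → Vb × Vf → Vb × Vf)
    (hRop : ∀ X Y Z W, gV (Rop X Y Z) W = RV X Y Z W)
    (L : ℝ)
    (hmain : (∀ X1 X2 X3 X4 X Y : Vb × Vf, WPS.dot4 Rop RV X1 X2 X3 X4 X Y
      = L * WPS.Q4 gV RV X1 X2 X3 X4 X Y)) :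
    (∀ x y z w u v : Vb, WPS.dot4 Rbop Rb x y z w u v
        = L * WPS.Q4 gb Rb x y z w u v)
    ∧ (∀ a b c d u v : Vf, WPS.dot4 Rfop Rf a b c d u v
        = f * (Δ + L) * WPS.Q4 gf Rf a b c d u v)
    ∧ (∀ x y u v : Vb, WPS.dot2 Rbop T x y u v = L * WPS.Q2 gb T x y u v) := by
  -- basic bilinearity facts
  have gbsym := hgb.1
  have gfsym := hgf.1
  have gb_zl : ∀ y : Vb, gb 0 y = 0 := fun y => (hgb.2 y).map_zero
  have gb_zr : ∀ x : Vb, gb x 0 = 0 := fun x => by rw [gbsym]; exact gb_zl x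
  have gb_subl : ∀ x y z : Vb, gb (x - y) z = gb x z - gb y z :=
    fun x y z => (hgb.2 z).map_sub x y
  have gf_zl : ∀ y : Vf, gf 0 y = 0 := fun y => (hgf.2 y).map_zero
  have gf_zr : ∀ x : Vf, gf x 0 = 0 := fun x => by rw [gfsym]; exact gf_zl x
  have gf_subl : ∀ x y z : Vf, gf (x - y) z = gf x z - gf y z :=
    fun x y z => (hgf.2 z).map_sub x y
  have gf_addl : ∀ x y z : Vf, gf (x + y) z = gf x z + gf y z :=
    fun x y z => (hgf.2 z).map_add x y
  have gf_smul_l : ∀ (r : ℝ) (x y : Vf), gf (r • x) y = r * gf x y := by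
    intro r x y
    have := (hgf.2 y).map_smul r x
    rwa [smul_eq_mul] at this
  have gf_subr : ∀ x y z : Vf, gf x (y - z) = gf x y - gf x z := by
    intro x y z; rw [gfsym, gf_subl, gfsym, gfsym z]
  have gf_addr : ∀ x y z : Vf, gf x (y + z) = gf x y + gf x z := by
    intro x y z; rw [gfsym, gf_addl, gfsym, gfsym z]
  have gf_smulr : ∀ (r : ℝ) (x y : Vf), gf x (r • y) = r * gf x y := by
    intro r x y; rw [gfsym, gf_smul_l, gfsym]
  have T_zl : ∀ y : Vb, T 0 y = 0 := fun y => (hT.2 y).map_zero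
  have T_zr : ∀ x : Vb, T x 0 = 0 := fun x => by rw [hT.1]; exact T_zl x
  -- curvature zero lemmas
  have Rb_z1 : ∀ y z w : Vb, Rb 0 y z w = 0 := fun y z w => (hRb.1 y z w).map_zero
  have Rb_z2 : ∀ x z w : Vb, Rb x 0 z w = 0 := fun x z w => (hRb.2.1 x z w).map_zero
  have Rb_z3 : ∀ x y w : Vb, Rb x y 0 w = 0 := fun x y w => (hRb.2.2.1 x y w).map_zero
  have Rb_z4 : ∀ x y z : Vb, Rb x y z 0 = 0 := fun x y z => (hRb.2.2.2.1 x y z).map_zero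
  have Rf_z1 : ∀ y z w : Vf, Rf 0 y z w = 0 := fun y z w => (hRf.1 y z w).map_zero
  have Rf_z2 : ∀ x z w : Vf, Rf x 0 z w = 0 := fun x z w => (hRf.2.1 x z w).map_zero
  have Rf_z3 : ∀ x y w : Vf, Rf x y 0 w = 0 := fun x y w => (hRf.2.2.1 x y w).map_zero
  have Rf_z4 : ∀ x y z : Vf, Rf x y z 0 = 0 := fun x y z => (hRf.2.2.2.1 x y z).map_zero
  have Rf_sub1 : ∀ x y b c d : Vf, Rf (x - y) b c d = Rf x b c d - Rf y b c d :=
    fun x y b c d => (hRf.1 b c d).map_sub x y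
  have Rf_sub2 : ∀ a x y c d : Vf, Rf a (x - y) c d = Rf a x c d - Rf a y c d :=
    fun a x y c d => (hRf.2.1 a c d).map_sub x y
  have Rf_sub3 : ∀ a b x y d : Vf, Rf a b (x - y) d = Rf a b x d - Rf a b y d :=
    fun a b x y d => (hRf.2.2.1 a b d).map_sub x y
  have Rf_sub4 : ∀ a b c x y : Vf, Rf a b c (x - y) = Rf a b c x - Rf a b c y :=
    fun a b c x y => (hRf.2.2.2.1 a b c).map_sub x y
  have Rf_smul1 : ∀ (r : ℝ) (x b c d : Vf), Rf (r • x) b c d = r * Rf x b c d := by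
    intro r x b c d; have := (hRf.1 b c d).map_smul r x; rwa [smul_eq_mul] at this
  have Rf_smul2 : ∀ (r : ℝ) (a x c d : Vf), Rf a (r • x) c d = r * Rf a x c d := by
    intro r a x c d; have := (hRf.2.1 a c d).map_smul r x; rwa [smul_eq_mul] at this
  have Rf_smul3 : ∀ (r : ℝ) (a b x d : Vf), Rf a b (r • x) d = r * Rf a b x d := by
    intro r a b x d; have := (hRf.2.2.1 a b d).map_smul r x; rwa [smul_eq_mul] at this
  have Rf_smul4 : ∀ (r : ℝ) (a b c x : Vf), Rf a b c (r • x) = r * Rf a b c x := by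
    intro r a b c x; have := (hRf.2.2.2.1 a b c).map_smul r x; rwa [smul_eq_mul] at this
  have hf' : f ≠ 0 := ne_of_gt hf
  -- nondegeneracy cancellation
  have gb_cancel : ∀ a b : Vb, (∀ w, gb a w = gb b w) → a = b := by
    intro a b h
    have h0 : ∀ w, gb (a - b) w = 0 := fun w => by rw [gb_subl, h, sub_self]
    exact sub_eq_zero.mp (hgbn _ h0)
  have gf_cancel : ∀ a b : Vf, (∀ w, gf a w = gf b w) → a = b := by
    intro a b h
    have h0 : ∀ w, gf (a - b) w = 0 := fun w => by rw [gf_subl, h, sub_self]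
    exact sub_eq_zero.mp (hgfn _ h0)
  -- components of Rop
  have ropB : ∀ u v z : Vb,
      Rop ((u, 0) : Vb × Vf) (v, 0) (z, 0) = (Rbop u v z, (0 : Vf)) := by
    intro u v z
    have c1 : (Rop ((u, 0) : Vb × Vf) (v, 0) (z, 0)).1 = Rbop u v z := by
      apply gb_cancel; intro w
      have h := hRop (u, 0) (v, 0) (z, 0) (w, 0)
      rw [hgV, hRV] at h
      simp only [WPS.Gten, gf_zl, gf_zr, Rf_z1, mul_zero, zero_mul, add_zero,
        sub_zero, zero_sub, neg_zero, sub_self] at h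
      rw [hRbop]; exact h
    have c2 : (Rop ((u, 0) : Vb × Vf) (v, 0) (z, 0)).2 = 0 := by
      apply hgfn; intro w
      have h := hRop (u, 0) (v, 0) (z, 0) (0, w)
      rw [hgV, hRV] at h
      simp only [WPS.Gten, gf_zl, gf_zr, gb_zr, Rf_z1, Rb_z4, mul_zero, zero_mul,
        add_zero, zero_add, sub_zero, zero_sub, neg_zero, sub_self] at h
      exact (mul_eq_zero.mp h).resolve_left hf'
    exact Prod.ext c1 c2
  have ropBF : ∀ (u v : Vb) (z : Vf),
      Rop ((u, 0) : Vb × Vf) (v, 0) (0, z) = 0 := by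
    intro u v z
    have c1 : (Rop ((u, 0) : Vb × Vf) (v, 0) (0, z)).1 = 0 := by
      apply hgbn; intro w
      have h := hRop (u, 0) (v, 0) (0, z) (w, 0)
      rw [hgV, hRV] at h
      simp only [WPS.Gten, gf_zl, gf_zr, Rf_z1, Rb_z3, T_zr, mul_zero, zero_mul,
        add_zero, zero_add, sub_zero, zero_sub, neg_zero, sub_self] at h
      exact h
    have c2 : (Rop ((u, 0) : Vb × Vf) (v, 0) (0, z)).2 = 0 := by
      apply hgfn; intro w
      have h := hRop (u, 0) (v, 0) (0, z) (0, w)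
      rw [hgV, hRV] at h
      simp only [WPS.Gten, gf_zl, gf_zr, gb_zr, Rf_z1, Rb_z3, T_zr, mul_zero,
        zero_mul, add_zero, zero_add, sub_zero, zero_sub, neg_zero, sub_self] at h
      exact (mul_eq_zero.mp h).resolve_left hf'
    have : Rop ((u, 0) : Vb × Vf) (v, 0) (0, z)
        = ((Rop ((u, 0) : Vb × Vf) (v, 0) (0, z)).1,
           (Rop ((u, 0) : Vb × Vf) (v, 0) (0, z)).2) := rfl
    rw [this, c1, c2]; rfl
  have ropF : ∀ u v z : Vf,
      Rop ((0, u) : Vb × Vf) (0, v) (0, z)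
        = ((0 : Vb), Rfop u v z - (f * Δ) • WPS.wedge gf u v z) := by
    intro u v z
    have c1 : (Rop ((0, u) : Vb × Vf) (0, v) (0, z)).1 = 0 := by
      apply hgbn; intro w
      have h := hRop (0, u) (0, v) (0, z) (w, 0)
      rw [hgV, hRV] at h
      simp only [WPS.Gten, gf_zl, gf_zr, Rf_z4, Rb_z1, T_zl, mul_zero, zero_mul,
        add_zero, zero_add, sub_zero, zero_sub, neg_zero, sub_self] at h
      exact h
    have c2 : (Rop ((0, u) : Vb × Vf) (0, v) (0, z)).2
        = Rfop u v z - (f * Δ) • WPS.wedge gf u v z := by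
      apply gf_cancel; intro w
      have h := hRop (0, u) (0, v) (0, z) (0, w)
      rw [hgV, hRV] at h
      simp only [WPS.Gten, gf_zl, gf_zr, gb_zr, Rb_z1, T_zl, mul_zero, zero_mul,
        add_zero, zero_add, sub_zero, zero_sub, neg_zero, sub_self] at h
      refine mul_left_cancel₀ hf' ?_
      rw [gf_subl, gf_smul_l, WPS.wedge, gf_subl, gf_smul_l, gf_smul_l, hRfop]
      linear_combination h
    exact Prod.ext c1 c2
  -- components of the wedge of gV
  have wedgeB : ∀ u v z : Vb,
      WPS.wedge gV ((u, 0) : Vb × Vf) (v, 0) (z, 0) = (WPS.wedge gb u v z, (0 : Vf)) := by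
    intro u v z
    simp only [WPS.wedge, hgV, gf_zl, mul_zero, add_zero, Prod.smul_mk, smul_zero,
      Prod.mk_sub_mk, sub_zero]
  have wedgeBF : ∀ (u v : Vb) (z : Vf),
      WPS.wedge gV ((u, 0) : Vb × Vf) (v, 0) (0, z) = 0 := by
    intro u v z
    simp only [WPS.wedge, hgV, gf_zl, gb_zr, mul_zero, add_zero, zero_add,
      zero_smul, sub_self]
  have wedgeF : ∀ u v z : Vf,
      WPS.wedge gV ((0, u) : Vb × Vf) (0, v) (0, z)
        = ((0 : Vb), f • WPS.wedge gf u v z) := by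
    intro u v z
    simp only [WPS.wedge, hgV, gb_zl, zero_add, Prod.smul_mk, smul_zero,
      Prod.mk_sub_mk, sub_zero, smul_sub, smul_smul]
  -- component values of RV
  have RVbase : ∀ a b c d : Vb,
      RV ((a, 0) : Vb × Vf) (b, 0) (c, 0) (d, 0) = Rb a b c d := by
    intro a b c d
    rw [hRV]
    simp only [WPS.Gten, gf_zl, gf_zr, Rf_z1, mul_zero, zero_mul, add_zero,
      sub_zero, zero_sub, neg_zero, sub_self]
  have RVm : ∀ (a : Vb) (s : Vf) (b : Vb) (t : Vf),
      RV ((a, 0) : Vb × Vf) (0, s) (b, 0) (0, t) = f * (T a b * gf s t) := by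
    intro a s b t
    rw [hRV]
    simp only [WPS.Gten, gf_zl, gf_zr, Rf_z1, Rb_z2, T_zl, T_zr, mul_zero,
      zero_mul, add_zero, zero_add, sub_zero, zero_sub, neg_zero, sub_self]
  have RVzero2 : ∀ X Z W : Vb × Vf, RV X 0 Z W = 0 := by
    intro X Z W
    rw [hRV]
    simp only [Prod.fst_zero, Prod.snd_zero, WPS.Gten, gf_zl, gf_zr, Rf_z2,
      Rb_z2, T_zl, T_zr, mul_zero, zero_mul, add_zero, zero_add, sub_zero,
      zero_sub, neg_zero, sub_self]
  have RVzero4 : ∀ X Y Z : Vb × Vf, RV X Y Z 0 = 0 := by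
    intro X Y Z
    rw [hRV]
    simp only [Prod.fst_zero, Prod.snd_zero, WPS.Gten, gf_zl, gf_zr, Rf_z4,
      Rb_z4, T_zl, T_zr, mul_zero, zero_mul, add_zero, zero_add, sub_zero,
      zero_sub, neg_zero, sub_self]
  have RVfib : ∀ s b c d : Vf,
      RV ((0, s) : Vb × Vf) (0, b) (0, c) (0, d)
        = f * Rf s b c d - f ^ 2 * Δ * (gf s d * gf b c - gf s c * gf b d) := by
    intro s b c d
    rw [hRV]
    simp only [WPS.Gten, Rb_z1, T_zl, mul_zero, zero_mul, add_zero, zero_add,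
      sub_zero, zero_sub, neg_zero, sub_self]
  -- the two "kill" identities used in the fibre computation
  have killR : ∀ u v a b c d : Vf,
      (gf (Rfop u v a) d * gf b c - gf (Rfop u v a) c * gf b d)
      + (gf a d * gf (Rfop u v b) c - gf a c * gf (Rfop u v b) d)
      + (gf a d * gf b (Rfop u v c) - gf a (Rfop u v c) * gf b d)
      + (gf a (Rfop u v d) * gf b c - gf a c * gf b (Rfop u v d)) = 0 := by
    intro u v a b c d
    have h2 : ∀ z w : Vf, gf z (Rfop u v w) = -Rf u v z w := by
      intro z w
      rw [gfsym, hRfop]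
      have := hRf.2.2.2.2.2.1 u v w z
      linarith [this, hRf.2.2.2.2.2.1 u v z w]
    simp only [hRfop, h2]
    ring
  have killW : ∀ u v a b c d : Vf,
      (gf (WPS.wedge gf u v a) d * gf b c - gf (WPS.wedge gf u v a) c * gf b d)
      + (gf a d * gf (WPS.wedge gf u v b) c - gf a c * gf (WPS.wedge gf u v b) d)
      + (gf a d * gf b (WPS.wedge gf u v c) - gf a (WPS.wedge gf u v c) * gf b d)
      + (gf a (WPS.wedge gf u v d) * gf b c - gf a c * gf b (WPS.wedge gf u v d)) = 0 := by
    intro u v a b c d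
    have h1 : ∀ z w : Vf, gf (WPS.wedge gf u v z) w = gf v z * gf u w - gf u z * gf v w := by
      intro z w
      rw [WPS.wedge, gf_subl, gf_smul_l, gf_smul_l]
    have h2 : ∀ z w : Vf, gf z (WPS.wedge gf u v w) = gf v w * gf u z - gf u w * gf v z := by
      intro z w
      rw [gfsym, h1]
    simp only [h1, h2]
    ring
  refine ⟨?_, ?_, ?_⟩
  · -- base pseudosymmetry
    intro x y z w u v
    have H := hmain (x, 0) (y, 0) (z, 0) (w, 0) (u, 0) (v, 0)
    simp only [WPS.dot4, WPS.Q4, ropB, wedgeB, RVbase] at H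
    simp only [WPS.dot4, WPS.Q4]
    linear_combination H
  · -- fibre pseudosymmetry
    intro a b c d u v
    have H := hmain (0, a) (0, b) (0, c) (0, d) (0, u) (0, v)
    simp only [WPS.dot4, WPS.Q4, ropF, wedgeF, RVfib] at H
    simp only [Rf_sub1, Rf_sub2, Rf_sub3, Rf_sub4, Rf_smul1, Rf_smul2, Rf_smul3,
      Rf_smul4, gf_subl, gf_subr, gf_smul_l, gf_smulr] at H
    have KR := killR u v a b c d
    have KW := killW u v a b c d
    refine mul_left_cancel₀ hf' ?_
    simp only [WPS.dot4, WPS.Q4]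
    linear_combination H + (-(f ^ 2 * Δ)) * KR + (f ^ 3 * Δ ^ 2 + L * f ^ 3 * Δ) * KW
  · -- T condition
    intro x y u v
    obtain ⟨a, ha⟩ : ∃ a : Vf, gf a a ≠ 0 := by
      by_contra hcon
      push_neg at hcon
      have hall : ∀ s t : Vf, gf s t = 0 := by
        intro s t
        have h1 := hcon (s + t)
        rw [gf_addl, gf_addr, gf_addr, hcon s, hcon t, gfsym t s] at h1
        linarith
      have hz : ∀ s : Vf, s = 0 := fun s => hgfn s (hall s)
      have hnt : Nontrivial Vf := by
        refine Module.finrank_pos_iff (R := ℝ).mp ?_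
        rw [hdf]; omega
      obtain ⟨s, t, hst⟩ := hnt
      exact hst ((hz s).trans (hz t).symm)
    have H := hmain (x, 0) (0, a) (y, 0) (0, a) (u, 0) (v, 0)
    simp only [WPS.dot4, WPS.Q4, ropB, ropBF, wedgeB, wedgeBF, RVm, RVzero2,
      RVzero4, neg_zero, sub_zero, add_zero] at H
    have hne : f * gf a a ≠ 0 := mul_ne_zero hf' ha
    refine mul_left_cancel₀ hne ?_
    simp only [WPS.dot2, WPS.Q2]
    linear_combination H
end

section
/- With the pointwise warped-product curvature data of the setup: if R·R = Q(S,R) holds on V (all operations taken with respect to g), then either R̄ = 0 (the base is flat at the point) or S̃ = (κ̃/q) g̃ (the fiber is Einstein at the point). -/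
theorem stmt14
    {Vb Vf : Type} [AddCommGroup Vb] [Module ℝ Vb] [FiniteDimensional ℝ Vb]
    [AddCommGroup Vf] [Module ℝ Vf] [FiniteDimensional ℝ Vf]
    (p q : ℕ) (hp : 1 ≤ p) (hq : 1 ≤ q) (hn : 3 ≤ p + q)
    (hdb : Module.finrank ℝ Vb = p) (hdf : Module.finrank ℝ Vf = q)
    (gb : Vb → Vb → ℝ) (hgb : WPS.SymBilin gb) (hgbn : WPS.Nondeg gb)
    (gf : Vf → Vf → ℝ) (hgf : WPS.SymBilin gf) (hgfn : WPS.Nondeg gf)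
    (f Δ : ℝ) (hf : 0 < f)
    (T : Vb → Vb → ℝ) (hT : WPS.SymBilin T)
    (Tsh : Vb →ₗ[ℝ] Vb) (hTsh : ∀ x y, gb (Tsh x) y = T x y)
    (Ω : ℝ) (hΩ : Ω = -f * (((q : ℝ) - 1) * Δ + LinearMap.trace ℝ Vb Tsh))
    (Rb : Vb → Vb → Vb → Vb → ℝ) (hRb : WPS.Curv Rb)
    (Rf : Vf → Vf → Vf → Vf → ℝ) (hRf : WPS.Curv Rf)
    (Rbop : Vb → Vb → Vb → Vb) (hRbop : ∀ x y z w, gb (Rbop x y z) w = Rb x y z w)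
    (Rfop : Vf → Vf → Vf → Vf) (hRfop : ∀ x y z w, gf (Rfop x y z) w = Rf x y z w)
    (Sb : Vb → Vb → ℝ)
    (hSb : ∀ y z, ∃ E : Vb →ₗ[ℝ] Vb, (∀ x w, gb (E x) w = Rb x y z w) ∧
      Sb y z = LinearMap.trace ℝ Vb E)
    (Sf : Vf → Vf → ℝ)
    (hSf : ∀ y z, ∃ E : Vf →ₗ[ℝ] Vf, (∀ x w, gf (E x) w = Rf x y z w) ∧
      Sf y z = LinearMap.trace ℝ Vf E)
    (κf : ℝ)
    (hκf : ∃ E : Vf →ₗ[ℝ] Vf, (∀ x y, gf (E x) y = Sf x y) ∧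
      κf = LinearMap.trace ℝ Vf E)
    (gV : Vb × Vf → Vb × Vf → ℝ)
    (hgV : ∀ X Y, gV X Y = gb X.1 Y.1 + f * gf X.2 Y.2)
    (RV : Vb × Vf → Vb × Vf → Vb × Vf → Vb × Vf → ℝ)
    (hRV : ∀ X Y Z W, RV X Y Z W = Rb X.1 Y.1 Z.1 W.1
      + f * (T X.1 Z.1 * gf Y.2 W.2 + T Y.1 W.1 * gf X.2 Z.2
        - T X.1 W.1 * gf Y.2 Z.2 - T Y.1 Z.1 * gf X.2 W.2)
      + f * Rf X.2 Y.2 Z.2 W.2 - f ^ 2 * Δ * WPS.Gten gf X.2 Y.2 Z.2 W.2)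
    (SV : Vb × Vf → Vb × Vf → ℝ)
    (hSV : ∀ X Y, SV X Y = (Sb X.1 Y.1 - (q : ℝ) * T X.1 Y.1)
      + (Sf X.2 Y.2 + Ω * gf X.2 Y.2))
    (Rop : Vb × Vf → Vb × Vf → Vb × Vf → Vb × Vf)
    (hRop : ∀ X Y Z W, gV (Rop X Y Z) W = RV X Y Z W)
    (hmain : (∀ X1 X2 X3 X4 X Y : Vb × Vf, WPS.dot4 Rop RV X1 X2 X3 X4 X Y
      = WPS.Q4 SV RV X1 X2 X3 X4 X Y)) :
    (∀ x y z w : Vb, Rb x y z w = 0) ∨ (∀ a b : Vf, Sf a b = (κf / (q : ℝ)) * gf a b) := by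
  obtain ⟨gbs, gbl⟩ := hgb
  obtain ⟨gfs, gfl⟩ := hgf
  obtain ⟨Ts, Tl⟩ := hT
  obtain ⟨Rbl1, Rbl2, Rbl3, Rbl4, -, -, -, -⟩ := hRb
  obtain ⟨Rfl1, Rfl2, Rfl3, Rfl4, -, -, -, -⟩ := hRf
  have gb0l : ∀ y, gb 0 y = 0 := fun y => (gbl y).map_zero
  have gb0r : ∀ x, gb x 0 = 0 := fun x => by rw [gbs]; exact (gbl x).map_zero
  have gbsml : ∀ (c : ℝ) x y, gb (c • x) y = c * gb x y := fun c x y => by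
    rw [(gbl y).map_smul]; rfl
  have gbnegl : ∀ x y, gb (-x) y = -gb x y := fun x y => (gbl y).map_neg x
  have gbsub : ∀ x x' y, gb (x - x') y = gb x y - gb x' y := fun x x' y =>
    (gbl y).map_sub x x'
  have gf0l : ∀ y, gf 0 y = 0 := fun y => (gfl y).map_zero
  have gf0r : ∀ x, gf x 0 = 0 := fun x => by rw [gfs]; exact (gfl x).map_zero
  have gfsml : ∀ (c : ℝ) x y, gf (c • x) y = c * gf x y := fun c x y => by
    rw [(gfl y).map_smul]; rfl
  have gfsmr : ∀ (c : ℝ) x y, gf x (c • y) = c * gf x y := fun c x y => by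
    rw [gfs, gfsml, gfs]
  have gfnegl : ∀ x y, gf (-x) y = -gf x y := fun x y => (gfl y).map_neg x
  have gfnegr : ∀ x y, gf x (-y) = -gf x y := fun x y => by rw [gfs, gfnegl, gfs]
  have gfsub : ∀ x x' y, gf (x - x') y = gf x y - gf x' y := fun x x' y =>
    (gfl y).map_sub x x'
  have T0l : ∀ y, T 0 y = 0 := fun y => (Tl y).map_zero
  have T0r : ∀ x, T x 0 = 0 := fun x => by rw [Ts]; exact (Tl x).map_zero
  have Tsml : ∀ (c : ℝ) x y, T (c • x) y = c * T x y := fun c x y => by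
    rw [(Tl y).map_smul]; rfl
  have Tsmr : ∀ (c : ℝ) x y, T x (c • y) = c * T x y := fun c x y => by
    rw [Ts, Tsml, Ts]
  have Tnegl : ∀ x y, T (-x) y = -T x y := fun x y => (Tl y).map_neg x
  have Tnegr : ∀ x y, T x (-y) = -T x y := fun x y => by rw [Ts, Tnegl, Ts]
  have Rb01 : ∀ y z w, Rb 0 y z w = 0 := fun y z w => (Rbl1 y z w).map_zero
  have Rb02 : ∀ x z w, Rb x 0 z w = 0 := fun x z w => (Rbl2 x z w).map_zero
  have Rb03 : ∀ x y w, Rb x y 0 w = 0 := fun x y w => (Rbl3 x y w).map_zero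
  have Rb04 : ∀ x y z, Rb x y z 0 = 0 := fun x y z => (Rbl4 x y z).map_zero
  have Rbsm4 : ∀ (c : ℝ) x y z u, Rb x y z (c • u) = c * Rb x y z u :=
    fun c x y z u => by rw [(Rbl4 x y z).map_smul]; rfl
  have Rbng4 : ∀ x y z u, Rb x y z (-u) = -Rb x y z u :=
    fun x y z u => (Rbl4 x y z).map_neg u
  have Rf01 : ∀ y z w, Rf 0 y z w = 0 := fun y z w => (Rfl1 y z w).map_zero
  have Rf02 : ∀ x z w, Rf x 0 z w = 0 := fun x z w => (Rfl2 x z w).map_zero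
  have Rf03 : ∀ x y w, Rf x y 0 w = 0 := fun x y w => (Rfl3 x y w).map_zero
  have Rf04 : ∀ x y z, Rf x y z 0 = 0 := fun x y z => (Rfl4 x y z).map_zero
  have Rfsm1 : ∀ (c : ℝ) x y z u, Rf (c • x) y z u = c * Rf x y z u :=
    fun c x y z u => by rw [(Rfl1 y z u).map_smul]; rfl
  have Rfng1 : ∀ x y z u, Rf (-x) y z u = -Rf x y z u :=
    fun x y z u => (Rfl1 y z u).map_neg x
  have Sb0l : ∀ z, Sb 0 z = 0 := by
    intro z
    obtain ⟨E, hE, htr⟩ := hSb 0 z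
    have hE0 : E = 0 := by
      apply LinearMap.ext; intro u
      simp only [LinearMap.zero_apply]
      exact hgbn _ (fun w' => by rw [hE]; exact Rb02 u z w')
    rw [htr, hE0, map_zero]
  have Sb0r : ∀ y, Sb y 0 = 0 := by
    intro y
    obtain ⟨E, hE, htr⟩ := hSb y 0
    have hE0 : E = 0 := by
      apply LinearMap.ext; intro u
      simp only [LinearMap.zero_apply]
      exact hgbn _ (fun w' => by rw [hE]; exact Rb03 u y w')
    rw [htr, hE0, map_zero]
  have Sf0l : ∀ z, Sf 0 z = 0 := by
    intro z
    obtain ⟨E, hE, htr⟩ := hSf 0 z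
    have hE0 : E = 0 := by
      apply LinearMap.ext; intro u
      simp only [LinearMap.zero_apply]
      exact hgfn _ (fun w' => by rw [hE]; exact Rf02 u z w')
    rw [htr, hE0, map_zero]
  have Sf0r : ∀ y, Sf y 0 = 0 := by
    intro y
    obtain ⟨E, hE, htr⟩ := hSf y 0
    have hE0 : E = 0 := by
      apply LinearMap.ext; intro u
      simp only [LinearMap.zero_apply]
      exact hgfn _ (fun w' => by rw [hE]; exact Rf03 u y w')
    rw [htr, hE0, map_zero]
  have hginv : ∀ v v' : Vb × Vf, (∀ W, gV v W = gV v' W) → v = v' := by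
    intro v v' h
    have h1 : v.1 = v'.1 := by
      have h0 : v.1 - v'.1 = 0 := by
        apply hgbn
        intro u
        have h' := h (u, 0)
        rw [hgV, hgV, gf0r, gf0r] at h'
        rw [gbsub]
        linarith
      exact sub_eq_zero.mp h0
    have h2 : v.2 = v'.2 := by
      have h0 : v.2 - v'.2 = 0 := by
        apply hgfn
        intro c
        have h' := h (0, c)
        rw [hgV, hgV, gb0r, gb0r] at h'
        have h'' : gf v.2 c = gf v'.2 c :=
          mul_left_cancel₀ (ne_of_gt hf) (by linarith)
        rw [gfsub]
        linarith
      exact sub_eq_zero.mp h0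
    exact Prod.ext h1 h2
  have ropval : ∀ X Y Z v, (∀ W, gV v W = RV X Y Z W) → Rop X Y Z = v :=
    fun X Y Z v hv => hginv _ _ fun W => (hRop X Y Z W).trans (hv W).symm
  by_cases hc : ∀ x y z w : Vb, Rb x y z w = 0
  · exact Or.inl hc
  right
  push_neg at hc
  obtain ⟨x, y, z, w, hr⟩ := hc
  set C : ℝ := -(Ω * Rb x y z w) - f * (T w x * T y z - T w y * T x z
      + Rb x y z (Tsh w) + (Sb w x - q * T w x) * T y z
      - (Sb w y - q * T w y) * T x z) with hC
  have key : ∀ a b : Vf, Sf a b * Rb x y z w = gf a b * C := by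
    intro a b
    have e1 : Rop (w, (0 : Vf)) ((0 : Vb), a) (x, (0 : Vf))
        = ((0 : Vb), T w x • a) := by
      apply ropval; intro W
      rw [hgV, hRV]
      simp [WPS.Gten, gb0l, gf0l, gf0r, gfsml, T0l, T0r, Rb02, Rf01, Rf03]
    have e2 : Rop (w, (0 : Vf)) ((0 : Vb), a) (y, (0 : Vf))
        = ((0 : Vb), T w y • a) := by
      apply ropval; intro W
      rw [hgV, hRV]
      simp [WPS.Gten, gb0l, gf0l, gf0r, gfsml, T0l, T0r, Rb02, Rf01, Rf03]
    have e3 : Rop (w, (0 : Vf)) ((0 : Vb), a) (z, (0 : Vf))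
        = ((0 : Vb), T w z • a) := by
      apply ropval; intro W
      rw [hgV, hRV]
      simp [WPS.Gten, gb0l, gf0l, gf0r, gfsml, T0l, T0r, Rb02, Rf01, Rf03]
    have e4 : Rop (w, (0 : Vf)) ((0 : Vb), a) ((0 : Vb), b)
        = ((-(f * gf a b)) • Tsh w, (0 : Vf)) := by
      apply ropval; intro W
      rw [hgV, hRV]
      simp [WPS.Gten, gb0l, gf0l, gf0r, gbsml, gbnegl, hTsh, T0l, T0r, Rb02,
        Rb03, Rf01, Rf04]
      ring
    have K := hmain (x, (0 : Vf)) (y, (0 : Vf)) (z, (0 : Vf)) ((0 : Vb), b)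
      (w, (0 : Vf)) ((0 : Vb), a)
    simp only [WPS.dot4, WPS.Q4, WPS.wedge] at K
    rw [e1, e2, e3, e4] at K
    simp only [hSV, hRV, WPS.Gten] at K
    simp [gb0l, gb0r, gf0l, gf0r, gfsml, gfsmr, gfnegl, gfnegr, gbsml,
      T0l, T0r, Tsml, Tsmr, Tnegl, Tnegr, Rb01, Rb02, Rb03, Rb04, Rbsm4,
      Rbng4, Rf01, Rf02, Rf03, Rf04, Rfsm1, Rfng1, Sb0l, Sb0r, Sf0l, Sf0r,
      hTsh, smul_smul] at K
    rw [hC]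
    linarith [K]
  have hq0 : (q : ℝ) ≠ 0 := Nat.cast_ne_zero.mpr (by omega)
  have hμ : ∀ a b : Vf, Sf a b = (C / Rb x y z w) * gf a b := by
    intro a b
    rw [div_mul_eq_mul_div, eq_div_iff hr]
    linear_combination key a b
  obtain ⟨E, hE, hκ⟩ := hκf
  have hEu : ∀ u, E u = (C / Rb x y z w) • u := by
    intro u
    have h0 : E u - (C / Rb x y z w) • u = 0 := by
      apply hgfn
      intro c
      rw [gfsub, gfsml, hE, hμ u c]
      ring
    exact sub_eq_zero.mp h0
  have hEeq : E = (C / Rb x y z w) • LinearMap.id := by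
    apply LinearMap.ext; intro u
    rw [hEu]; rfl
  have hκ' : κf = (C / Rb x y z w) * q := by
    rw [hκ, hEeq, map_smul, LinearMap.trace_id, hdf]
    simp [smul_eq_mul]
  intro a b
  rw [hμ a b, hκ']
  congr 1
  field_simp
end
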